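/- arXiv:1405.2190 — 6 statements merged into one kernel-verified Lean document; each statement's English description precedes it below -/
import Mathlib

section
/- Suppose there exist measurable functions λ_i : [0,T] → ℝ with 0 ≤ λ_i(t) ≤ 1 a.e. in [0,T] for i = 1,…,p and a constant σ > 0 such that min_{j=1,…,q} Σ_{i=1}^p λ_i(t) B_{ij}(t) ≥ σ a.e. in [0,T]. Then every feasible solution z of (CLP_ε) satisfies Σ_{j=1}^q |z_j(t)| ≤ (p(ζ+ε)/σ) · exp(p φ t / σ) a.e. in [0,T], where ζ = max_i ‖c_i‖_∞ and φ = max_i Σ_j ‖K_{ij}‖_∞. -/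
/-!
Weighting the `i`-th constraint by `λ_i(t) ∈ [0, 1]` and summing over `i` bounds `σ u(t)`,
where `u = Σ_j z_j`, by `p (ζ + ε + φ ∫₀ᵗ u)`. Hence `u(t) ≤ a + b ∫₀ᵗ u` with
`a = p (ζ + ε) / σ` and `b = p φ / σ`, and the integral form of Grönwall's inequality
gives `u(t) ≤ a e^{b t}`.
-/

open MeasureTheory Set

theorem ae_le_mul_exp_of_ae_le_add_mul_integral {u : ℝ → ℝ} {a b t₀ T : ℝ} (hb : 0 ≤ b)
    (hu : IntegrableOn u (Icc t₀ T))
    (hle : ∀ᵐ t ∂volume.restrict (Icc t₀ T), u t ≤ a + b * ∫ s in t₀..t, u s) :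
    ∀ᵐ t ∂volume.restrict (Icc t₀ T), u t ≤ a * Real.exp (b * (t - t₀)) := by
  -- Extending `u` by zero makes its primitive `F` continuous on all of `ℝ`.
  set F : ℝ → ℝ := fun t => ∫ s in t₀..t, (Icc t₀ T).indicator u s
  have hF : Continuous F := (hu.integrable_indicator measurableSet_Icc).continuous_primitive t₀
  have hF_eq : ∀ t ∈ Icc t₀ T, F t = ∫ s in t₀..t, u s := fun t ht =>
    intervalIntegral.integral_congr fun s hs => by
      rw [uIcc_of_le ht.1] at hs
      exact indicator_of_mem (Icc_subset_Icc_right ht.2 hs) u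
  have hle' :
      ∀ᵐ t ∂volume.restrict (Icc t₀ T), (Icc t₀ T).indicator u t ≤ a + b * F t := by
    filter_upwards [hle, ae_restrict_mem measurableSet_Icc] with t h ht
    rwa [indicator_of_mem ht, hF_eq t ht]
  have hg : Continuous fun t => a + b * F t := continuous_const.add (continuous_const.mul hF)
  set H : ℝ → ℝ := fun t => a + b * ∫ s in t₀..t, a + b * F s
  have hH : ∀ t, HasDerivAt H (b * (a + b * F t)) t := fun t =>
    ((hg.integral_hasStrictDerivAt t₀ t).hasDerivAt.const_mul b).const_add a
  have hF_le_H : ∀ t ∈ Icc t₀ T, a + b * F t ≤ H t := fun t ht => by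
    simp only [H]
    gcongr
    exact intervalIntegral.integral_mono_ae_restrict ht.1
      (hu.integrable_indicator measurableSet_Icc).intervalIntegrable (hg.intervalIntegrable t₀ t)
      (ae_restrict_of_ae_restrict_of_subset (Icc_subset_Icc_right ht.2) hle')
  have hH_le : ∀ t ∈ Icc t₀ T, H t ≤ a * Real.exp (b * (t - t₀)) := by
    intro t ht
    rw [← gronwallBound_ε0]
    refine le_gronwallBound_of_liminf_deriv_right_le
      (fun x _ => (hH x).continuousAt.continuousWithinAt)
      (fun x _ r hr => (hH x).hasDerivWithinAt.liminf_right_slope_le hr) (by simp [H]) ?_ t ht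
    intro x hx
    simpa using mul_le_mul_of_nonneg_left (hF_le_H x (Ico_subset_Icc_self hx)) hb
  filter_upwards [hle', ae_restrict_mem measurableSet_Icc] with t h ht
  rw [indicator_of_mem ht] at h
  exact h.trans ((hF_le_H t ht).trans (hH_le t ht))

theorem abs_sum_mul_le_mul_sum {ι : Type*} (s : Finset ι) {k z : ι → ℝ} {φ : ℝ}
    (hk : ∀ j ∈ s, |k j| ≤ φ) (hz : ∀ j ∈ s, 0 ≤ z j) :
    |∑ j ∈ s, k j * z j| ≤ φ * ∑ j ∈ s, z j :=
  calc |∑ j ∈ s, k j * z j| ≤ ∑ j ∈ s, |k j| * z j := by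
        refine (Finset.abs_sum_le_sum_abs _ _).trans_eq (Finset.sum_congr rfl fun j hj => ?_)
        rw [abs_mul, abs_of_nonneg (hz j hj)]
    _ ≤ ∑ j ∈ s, φ * z j :=
        Finset.sum_le_sum fun j hj => by gcongr; exacts [hz j hj, hk j hj]
    _ = φ * ∑ j ∈ s, z j := (Finset.mul_sum _ _ _).symm

theorem abs_integral_sum_mul_le {α ι : Type*} [MeasurableSpace α] [Fintype ι] {ν : Measure α}
    {k z : α → ι → ℝ} {φ : ℝ} (hz : ∀ j, Integrable (fun s => z s j) ν)
    (hz0 : ∀ᵐ s ∂ν, ∀ j, 0 ≤ z s j) (hk : ∀ᵐ s ∂ν, ∀ j, |k s j| ≤ φ) :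
    |∫ s, ∑ j, k s j * z s j ∂ν| ≤ φ * ∫ s, ∑ j, z s j ∂ν := by
  rw [← Real.norm_eq_abs, ← integral_const_mul]
  refine norm_integral_le_of_norm_le ((integrable_finsetSum _ fun j _ => hz j).const_mul φ) ?_
  filter_upwards [hz0, hk] with s hzs hks
  exact abs_sum_mul_le_mul_sum _ (fun j _ => hks j) fun j _ => hzs j

theorem ae_abs_setIntegral_Icc_sum_mul_le {ι : Type*} [Fintype ι] {t₀ T φ : ℝ}
    {K : ℝ → ℝ → ι → ℝ} {z : ℝ → ι → ℝ} (hz : ∀ j, IntegrableOn (fun s => z s j) (Icc t₀ T))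
    (hz0 : ∀ᵐ s ∂volume.restrict (Icc t₀ T), ∀ j, 0 ≤ z s j)
    (hK : ∀ᵐ x ∂(volume.restrict (Icc t₀ T)).prod (volume.restrict (Icc t₀ T)),
      ∑ j, |K x.1 x.2 j| ≤ φ) :
    ∀ᵐ t ∂volume.restrict (Icc t₀ T),
      |∫ s in Icc t₀ t, ∑ j, K t s j * z s j| ≤ φ * ∫ s in Icc t₀ t, ∑ j, z s j := by
  filter_upwards [Measure.ae_ae_of_ae_prod hK, ae_restrict_mem measurableSet_Icc]
    with t ht htT
  have hsub : Icc t₀ t ⊆ Icc t₀ T := Icc_subset_Icc_right htT.2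
  refine abs_integral_sum_mul_le (fun j => (hz j).mono_set hsub)
    (ae_restrict_of_ae_restrict_of_subset hsub hz0) (ae_restrict_of_ae_restrict_of_subset hsub ?_)
  exact ht.mono fun s hs j =>
    (Finset.single_le_sum (fun j _ => abs_nonneg _) (Finset.mem_univ j)).trans hs

theorem mul_sum_le_sum_of_rows_le {ι κ : Type*} [Fintype ι] [Fintype κ] {lam R : ι → ℝ}
    {B : ι → κ → ℝ} {z : κ → ℝ} {σ : ℝ} (hlam : ∀ i, 0 ≤ lam i ∧ lam i ≤ 1)
    (hmin : ∀ j, σ ≤ ∑ i, lam i * B i j) (hz : ∀ j, 0 ≤ z j)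
    (hrow : ∀ i, ∑ j, B i j * z j ≤ R i) (hR : ∀ i, 0 ≤ R i) :
    σ * ∑ j, z j ≤ ∑ i, R i :=
  calc σ * ∑ j, z j ≤ ∑ j, (∑ i, lam i * B i j) * z j := by
        rw [Finset.mul_sum]; gcongr with j; exacts [hz j, hmin j]
    _ = ∑ i, lam i * ∑ j, B i j * z j := by
        simp only [Finset.sum_mul, Finset.mul_sum, mul_assoc]; exact Finset.sum_comm
    _ ≤ ∑ i, R i := Finset.sum_le_sum fun i _ =>
        (mul_le_mul_of_nonneg_left (hrow i) (hlam i).1).trans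
          (mul_le_of_le_one_left (hR i) (hlam i).2)

theorem mul_sum_le_card_mul_of_rows_le_add {ι κ : Type*} [Fintype ι] [Fintype κ]
    {lam c r : ι → ℝ} {B : ι → κ → ℝ} {z : κ → ℝ} {σ ε ζ ψ : ℝ}
    (hlam : ∀ i, 0 ≤ lam i ∧ lam i ≤ 1) (hmin : ∀ j, σ ≤ ∑ i, lam i * B i j)
    (hz : ∀ j, 0 ≤ z j) (hε : 0 ≤ ε) (hc : ∀ i, |c i| ≤ ζ) (hr : ∀ i, |r i| ≤ ψ)
    (hrow : ∀ i, ∑ j, B i j * z j ≤ c i + ε + r i) :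
    σ * ∑ j, z j ≤ Fintype.card ι * (ζ + ε + ψ) :=
  calc σ * ∑ j, z j ≤ ∑ i, (|c i| + ε + |r i|) :=
        mul_sum_le_sum_of_rows_le hlam hmin hz
          (fun i => (hrow i).trans (by gcongr <;> exact le_abs_self _)) fun i => by positivity
    _ ≤ ∑ _i : ι, (ζ + ε + ψ) := Finset.sum_le_sum fun i _ => by gcongr; exacts [hc i, hr i]
    _ = Fintype.card ι * (ζ + ε + ψ) := by simp; ring

theorem clp_eps_feasible_bound_general (T : ℝ) (hT : 0 < T) (p q : ℕ)
    (c : ℝ → Fin p → ℝ) (B : ℝ → Fin p → Fin q → ℝ)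
    (K : ℝ → ℝ → Fin p → Fin q → ℝ)
    (ε σ ζ φ : ℝ) (hε : 0 ≤ ε) (hσ : 0 < σ)
    (lam : Fin p → ℝ → ℝ)
    (hlam : ∀ i, ∀ᵐ t ∂(volume.restrict (Icc 0 T)), 0 ≤ lam i t ∧ lam i t ≤ 1)
    (hmin : ∀ j, ∀ᵐ t ∂(volume.restrict (Icc 0 T)), σ ≤ ∑ i, lam i t * B t i j)
    (hζ : ∀ i, ∀ᵐ t ∂(volume.restrict (Icc 0 T)), |c t i| ≤ ζ)
    (hφ : ∀ i, ∀ᵐ x ∂((volume.restrict (Icc 0 T)).prod (volume.restrict (Icc 0 T))),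
      ∑ j, |K x.1 x.2 i j| ≤ φ)
    (z : ℝ → Fin q → ℝ)
    (hz : ∀ j, MemLp (fun t => z t j) ⊤ (volume.restrict (Icc 0 T)))
    (hznn : ∀ᵐ t ∂(volume.restrict (Icc 0 T)), ∀ j, 0 ≤ z t j)
    (hzfeas : ∀ᵐ t ∂(volume.restrict (Icc 0 T)), ∀ i,
      ∑ j, B t i j * z t j ≤ c t i + ε + ∫ s in Icc 0 t, ∑ j, K t s i j * z s j) :
    ∀ᵐ t ∂(volume.restrict (Icc 0 T)),
      ∑ j, |z t j| ≤ (p * (ζ + ε) / σ) * Real.exp (p * φ * t / σ) := by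
  have hz_int : ∀ j, IntegrableOn (fun t => z t j) (Icc 0 T) := fun j => (hz j).integrable le_top
  have hpφ : 0 ≤ p * φ / σ := by
    refine div_nonneg ?_ hσ.le
    rcases p.eq_zero_or_pos with rfl | hp
    · simp
    have : (ae (volume.restrict (Icc 0 T))).NeBot := by rw [ae_restrict_neBot]; simp [hT]
    obtain ⟨t, ht⟩ := (Measure.ae_ae_of_ae_prod (hφ ⟨0, hp⟩)).exists
    obtain ⟨s, hs⟩ := ht.exists
    exact mul_nonneg p.cast_nonneg ((Finset.sum_nonneg fun j _ => abs_nonneg _).trans hs)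
  have hvolterra : ∀ᵐ t ∂(volume.restrict (Icc 0 T)),
      ∑ j, z t j ≤ p * (ζ + ε) / σ + p * φ / σ * ∫ s in 0..t, ∑ j, z s j := by
    filter_upwards [hzfeas, ae_all_iff.2 hlam, ae_all_iff.2 hmin, ae_all_iff.2 hζ, hznn,
      ae_all_iff.2 fun i =>
        ae_abs_setIntegral_Icc_sum_mul_le (K := fun t s => K t s i) hz_int hznn (hφ i),
      ae_restrict_mem measurableSet_Icc] with t hfeas hlt hmt hct hzt hkt ht
    have hweighted := mul_sum_le_card_mul_of_rows_le_add hlt hmt hzt hε hct hkt hfeas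
    rw [intervalIntegral.integral_of_le ht.1, ← integral_Icc_eq_integral_Ioc, div_mul_eq_mul_div,
      ← add_div, le_div_iff₀ hσ]
    simp only [Fintype.card_fin] at hweighted
    linarith
  filter_upwards [ae_le_mul_exp_of_ae_le_add_mul_integral hpφ
    (integrable_finsetSum _ fun j _ => hz_int j) hvolterra, hznn] with t ht hzt
  simpa [abs_of_nonneg (hzt _), mul_div_right_comm] using ht

/-- Proposition 3.1: uniform essential boundedness of the feasible set of (CLP_ε). -/
theorem clp_eps_feasible_bound (T : ℝ) (hT : 0 < T) (p q : ℕ)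
    (c : ℝ → Fin p → ℝ) (B : ℝ → Fin p → Fin q → ℝ)
    (K : ℝ → ℝ → Fin p → Fin q → ℝ)
    (ε σ ζ φ : ℝ) (hε : 0 ≤ ε) (hσ : 0 < σ)
    (lam : Fin p → ℝ → ℝ)
    (hlam : ∀ i, ∀ᵐ t ∂(volume.restrict (Icc 0 T)), 0 ≤ lam i t ∧ lam i t ≤ 1)
    (hmin : ∀ j, ∀ᵐ t ∂(volume.restrict (Icc 0 T)), σ ≤ ∑ i, lam i t * B t i j)
    (hζ : ∀ i, ∀ᵐ t ∂(volume.restrict (Icc 0 T)), |c t i| ≤ ζ)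
    (hφ : ∀ i, ∀ᵐ x ∂((volume.restrict (Icc 0 T)).prod (volume.restrict (Icc 0 T))),
      ∑ j, |K x.1 x.2 i j| ≤ φ)
    (hK : ∀ i j, MemLp (fun x : ℝ × ℝ => K x.1 x.2 i j) ⊤
      ((volume.restrict (Icc 0 T)).prod (volume.restrict (Icc 0 T))))
    (z : ℝ → Fin q → ℝ)
    (hz : ∀ j, MemLp (fun t => z t j) ⊤ (volume.restrict (Icc 0 T)))
    (hznn : ∀ᵐ t ∂(volume.restrict (Icc 0 T)), ∀ j, 0 ≤ z t j)
    (hzfeas : ∀ᵐ t ∂(volume.restrict (Icc 0 T)), ∀ i,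
      ∑ j, B t i j * z t j ≤ c t i + ε + ∫ s in Icc 0 t, ∑ j, K t s i j * z s j) :
    ∀ᵐ t ∂(volume.restrict (Icc 0 T)),
      ∑ j, |z t j| ≤ (p * (ζ + ε) / σ) * Real.exp (p * φ * t / σ) :=
  clp_eps_feasible_bound_general T hT p q c B K ε σ ζ φ hε hσ lam hlam hmin hζ hφ z hz hznn hzfeas
end

section
/- Suppose there exists σ > 0 such that Σ_{i=1}^p B_{ij}(t) ≥ σ a.e. in [0,T] for each j = 1,…,q. Define ρ_ε(t) = ((τ−ε)/σ)·exp(ν(T−t)/σ), where τ = max_j ‖a_j‖_∞ and ν = max_j Σ_{i=1}^p ‖K_{ij}‖_∞ and 0 ≤ ε ≤ τ. Then the constant-by-components function w(t) = (ρ_ε(t),…,ρ_ε(t)) ∈ ℝ^p satisfies, for each j and a.e. t ∈ [0,T], Σ_{i=1}^p B_{ij}(t) ρ_ε(t) ≥ a_j(t) − ε + Σ_{i=1}^p ∫ₜᵀ K_{ij}(s,t) ρ_ε(s) ds; i.e., w is a feasible solution of (DCLP_ε). -/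
/-!
Feasibility of `ρ_ε` rests on the identity `ν ∫ₜᵀ ρ_ε = σ ρ_ε(t) - (τ - ε)`, the integrated form
of `σ ρ_ε' = -ν ρ_ε` with `σ ρ_ε(T) = τ - ε`. Bounding the kernel term by `ν ∫ₜᵀ ρ_ε` and `a_j - ε`
by `τ - ε`, the left-hand side is at most `σ ρ_ε(t) ≤ (∑ᵢ Bᵢⱼ(t)) ρ_ε(t)`.
-/

open MeasureTheory Set

theorem MeasureTheory.Measure.ae_ae_of_ae_prod_right {α β : Type*} [MeasurableSpace α]
    [MeasurableSpace β] {μ : Measure α} {ν : Measure β} [SFinite μ] [SFinite ν]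
    {p : α × β → Prop} (h : ∀ᵐ z ∂μ.prod ν, p z) : ∀ᵐ y ∂ν, ∀ᵐ x ∂μ, p (x, y) :=
  Measure.ae_ae_of_ae_prod (Measure.measurePreserving_swap.quasiMeasurePreserving.ae h)

theorem sum_integral_mul_le_mul_integral {α ι : Type*} [MeasurableSpace α] {μ : Measure α}
    (s : Finset ι) {k : ι → α → ℝ} {ρ : α → ℝ} {ν : ℝ}
    (hk : ∀ i ∈ s, AEStronglyMeasurable (k i) μ) (hρ : Integrable ρ μ) (hρ0 : ∀ x, 0 ≤ ρ x)
    (hbound : ∀ᵐ x ∂μ, ∑ i ∈ s, |k i x| ≤ ν) :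
    ∑ i ∈ s, ∫ x, k i x * ρ x ∂μ ≤ ν * ∫ x, ρ x ∂μ := by
  have hint : ∀ i ∈ s, Integrable (fun x => k i x * ρ x) μ := fun i hi =>
    hρ.bdd_mul (hk i hi) <| hbound.mono fun x hx =>
      (Finset.single_le_sum (fun i _ => abs_nonneg (k i x)) hi).trans hx
  rw [← integral_finsetSum s hint, ← integral_const_mul]
  refine integral_mono_ae (integrable_finsetSum s hint) (hρ.const_mul ν) ?_
  filter_upwards [hbound] with x hx
  calc ∑ i ∈ s, k i x * ρ x ≤ ∑ i ∈ s, |k i x| * ρ x :=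
        Finset.sum_le_sum fun i _ => mul_le_mul_of_nonneg_right (le_abs_self _) (hρ0 x)
    _ = (∑ i ∈ s, |k i x|) * ρ x := (Finset.sum_mul _ _ _).symm
    _ ≤ ν * ρ x := mul_le_mul_of_nonneg_right hx (hρ0 x)

theorem mul_integral_exp_mul_sub (c t T : ℝ) :
    c * ∫ s in t..T, Real.exp (c * (T - s)) = Real.exp (c * (T - t)) - 1 := by
  simp_rw [mul_sub]
  rw [intervalIntegral.mul_integral_comp_sub_mul (f := Real.exp), integral_exp, sub_self,
    Real.exp_zero]

noncomputable def rhoEps (T ε σ τ ν t : ℝ) : ℝ :=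
  ((τ - ε) / σ) * Real.exp (ν * (T - t) / σ)

section rhoEps

variable {T ε σ τ ν : ℝ}

theorem rhoEps_nonneg (hσ : 0 < σ) (hτ : ε ≤ τ) (t : ℝ) : 0 ≤ rhoEps T ε σ τ ν t :=
  mul_nonneg (div_nonneg (sub_nonneg.mpr hτ) hσ.le) (Real.exp_pos _).le

theorem continuous_rhoEps : Continuous (rhoEps T ε σ τ ν) := by
  unfold rhoEps
  fun_prop

theorem mul_integral_rhoEps (hσ : σ ≠ 0) {t : ℝ} (htT : t ≤ T) :
    ν * ∫ s in Icc t T, rhoEps T ε σ τ ν s = σ * rhoEps T ε σ τ ν t - (τ - ε) := by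
  have hexp := mul_integral_exp_mul_sub (ν / σ) t T
  simp only [rhoEps, integral_const_mul, integral_Icc_eq_integral_Ioc,
    ← intervalIntegral.integral_of_le htT] at hexp ⊢
  simp only [div_mul_eq_mul_div] at hexp
  field_simp at hexp ⊢
  linear_combination (τ - ε) * hexp

end rhoEps

theorem dclp_eps_feasible_rho_general (T : ℝ) (p q : ℕ)
    (a : ℝ → Fin q → ℝ) (B : ℝ → Fin p → Fin q → ℝ)
    (K : ℝ → ℝ → Fin p → Fin q → ℝ)
    (ε σ τ ν : ℝ) (hσ : 0 < σ) (hτ : ε ≤ τ)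
    (hB : ∀ j, ∀ᵐ t ∂(volume.restrict (Icc 0 T)), σ ≤ ∑ i, B t i j)
    (ha : ∀ j, ∀ᵐ t ∂(volume.restrict (Icc 0 T)), |a t j| ≤ τ)
    (hK : ∀ i j, MemLp (fun x : ℝ × ℝ => K x.1 x.2 i j) ⊤
      ((volume.restrict (Icc 0 T)).prod (volume.restrict (Icc 0 T))))
    (hKν : ∀ j, ∀ᵐ x ∂((volume.restrict (Icc 0 T)).prod (volume.restrict (Icc 0 T))),
      ∑ i, |K x.1 x.2 i j| ≤ ν) :
    ∀ j, ∀ᵐ t ∂(volume.restrict (Icc 0 T)),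
      a t j - ε + ∑ i : Fin p, ∫ s in Icc t T,
          K s t i j * (((τ - ε) / σ) * Real.exp (ν * (T - s) / σ))
        ≤ ∑ i : Fin p, B t i j * (((τ - ε) / σ) * Real.exp (ν * (T - t) / σ)) := by
  intro j
  have hmeas := ae_all_iff.mpr fun i => (hK i j).aestronglyMeasurable.prodMk_right
  filter_upwards [hB j, ha j, hmeas, Measure.ae_ae_of_ae_prod_right (hKν j),
    ae_restrict_mem measurableSet_Icc] with t hBt hat hmeas_t hbound_t ⟨ht0, htT⟩
  have hsub : Icc t T ⊆ Icc 0 T := Icc_subset_Icc_left ht0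
  let ρ := rhoEps T ε σ τ ν
  have hρ0 := rhoEps_nonneg (ν := ν) (T := T) hσ hτ t
  calc a t j - ε + ∑ i, ∫ s in Icc t T, K s t i j * ρ s
      ≤ (τ - ε) + ν * ∫ s in Icc t T, ρ s := by
        gcongr
        · linarith [le_of_abs_le hat]
        · exact sum_integral_mul_le_mul_integral _
            (fun i _ => (hmeas_t i).mono_measure (Measure.restrict_mono hsub le_rfl))
            continuous_rhoEps.integrableOn_Icc (rhoEps_nonneg hσ hτ)
            (ae_restrict_of_ae_restrict_of_subset hsub hbound_t)
    _ = σ * ρ t := by rw [mul_integral_rhoEps hσ.ne' htT]; ring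
    _ ≤ (∑ i, B t i j) * ρ t := mul_le_mul_of_nonneg_right hBt hρ0
    _ = ∑ i, B t i j * ρ t := Finset.sum_mul _ _ _

/-- Proposition 3.4(i): the constant-by-components vector ρ_ε is feasible for (DCLP_ε). -/
theorem dclp_eps_feasible_rho (T : ℝ) (hT : 0 < T) (p q : ℕ)
    (a : ℝ → Fin q → ℝ) (B : ℝ → Fin p → Fin q → ℝ)
    (K : ℝ → ℝ → Fin p → Fin q → ℝ)
    (ε σ τ ν : ℝ) (hσ : 0 < σ) (hν : 0 < ν) (hε : 0 ≤ ε) (hτ : ε ≤ τ)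
    (hB : ∀ j, ∀ᵐ t ∂(volume.restrict (Icc 0 T)), σ ≤ ∑ i, B t i j)
    (ha : ∀ j, ∀ᵐ t ∂(volume.restrict (Icc 0 T)), |a t j| ≤ τ)
    (hK : ∀ i j, MemLp (fun x : ℝ × ℝ => K x.1 x.2 i j) ⊤
      ((volume.restrict (Icc 0 T)).prod (volume.restrict (Icc 0 T))))
    (hKν : ∀ j, ∀ᵐ x ∂((volume.restrict (Icc 0 T)).prod (volume.restrict (Icc 0 T))),
      ∑ i, |K x.1 x.2 i j| ≤ ν) :
    ∀ j, ∀ᵐ t ∂(volume.restrict (Icc 0 T)),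
      a t j - ε + ∑ i : Fin p, ∫ s in Icc t T,
          K s t i j * (((τ - ε) / σ) * Real.exp (ν * (T - s) / σ))
        ≤ ∑ i : Fin p, B t i j * (((τ - ε) / σ) * Real.exp (ν * (T - t) / σ)) :=
  dclp_eps_feasible_rho_general T p q a B K ε σ τ ν hσ hτ hB ha hK hKν
end

section
/- Suppose a sequence {f_k} in L²[0,T] is uniformly bounded in the L²-norm and converges weakly to f₀ ∈ L²[0,T]. Then f₀(t) ≤ limsup_{k→∞} f_k(t) for almost every t ∈ [0,T], and f₀(t) ≥ liminf_{k→∞} f_k(t) for almost every t ∈ [0,T]. -/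
/-!
Testing the weak convergence against indicators gives `∫ₛ fₖ → ∫ₛ f₀` for every measurable `s`.
If `fₖ ≤ c` on `s` for all large `k`, then every measurable piece of `s` has `∫ f₀ ≤ c · |piece|`,
so `f₀ ≤ c` a.e. on `s`. Taking `s = {x | ∀ k ≥ N, fₖ x ≤ c}` over all `N` and rational `c` yields
`f₀ ≤ limsup fₖ` a.e.; the `liminf` bound is the same statement for `-fₖ`.
-/

open MeasureTheory Set Filter Topology
open scoped ENNReal

namespace MeasureTheory

variable {α : Type*} [MeasurableSpace α] {μ : Measure α}

theorem integral_mul_indicator_one (f : α → ℝ) {s : Set α} (hs : MeasurableSet s) :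
    ∫ x, f x * s.indicator 1 x ∂μ = ∫ x in s, f x ∂μ := by
  simp_rw [← indicator_mul_right, Pi.one_apply, mul_one]
  exact integral_indicator hs

variable [SigmaFinite μ] {f : ℕ → α → ℝ} {f₀ : α → ℝ}

theorem ae_le_const_of_tendsto_setIntegral (hf : ∀ k, Integrable (f k) μ)
    (hf₀ : Integrable f₀ μ)
    (hlim : ∀ s, MeasurableSet s → μ s < ∞ →
      Tendsto (fun k => ∫ x in s, f k x ∂μ) atTop (𝓝 (∫ x in s, f₀ x ∂μ)))
    {c : ℝ} (hc : ∀ᶠ k in atTop, f k ≤ᵐ[μ] fun _ => c) :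
    f₀ ≤ᵐ[μ] fun _ => c := by
  have hc_int : ∀ s, μ s < ∞ → IntegrableOn (fun _ => c) s μ :=
    fun s hμs => integrableOn_const hμs.ne
  have hnonneg : 0 ≤ᵐ[μ] fun x => c - f₀ x := by
    refine ae_nonneg_of_forall_setIntegral_nonneg_of_sigmaFinite
      (fun s _ hμs => (hc_int s hμs).sub hf₀.integrableOn) fun s hs hμs => ?_
    rw [integral_sub (hc_int s hμs) hf₀.integrableOn, sub_nonneg]
    exact le_of_tendsto (hlim s hs hμs)
      (hc.mono fun k hk => setIntegral_mono_ae (hf k).integrableOn (hc_int s hμs) hk)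
  filter_upwards [hnonneg] with x hx using sub_nonneg.1 hx

theorem ae_imp_le_of_tendsto_setIntegral (hf : ∀ k, Integrable (f k) μ)
    (hf₀ : Integrable f₀ μ)
    (hlim : ∀ s, MeasurableSet s → μ s < ∞ →
      Tendsto (fun k => ∫ x in s, f k x ∂μ) atTop (𝓝 (∫ x in s, f₀ x ∂μ)))
    (N : ℕ) (c : ℝ) :
    ∀ᵐ x ∂μ, (∀ k ≥ N, f k x ≤ c) → f₀ x ≤ c := by
  set S := {x | ∀ k ≥ N, f k x ≤ c}
  have hS : NullMeasurableSet S μ := by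
    simp only [S, ofPred_forall]
    exact .iInter fun k => .iInter fun _ =>
      nullMeasurableSet_le (hf k).aemeasurable aemeasurable_const
  obtain ⟨S', hS'S, hS', hS'_eq⟩ := hS.exists_measurable_subset_ae_eq
  have hbound : ∀ᵐ x ∂μ.restrict S', f₀ x ≤ c := by
    refine ae_le_const_of_tendsto_setIntegral (fun k => (hf k).restrict) hf₀.restrict
      (fun s hs hμs => ?_) (eventually_atTop.2 ⟨N, fun k hk => ?_⟩)
    · rw [Measure.restrict_restrict hs]
      rw [Measure.restrict_apply hs] at hμs
      exact hlim _ (hs.inter hS') hμs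
    · exact (ae_restrict_iff' hS').2 (.of_forall fun x hx => hS'S hx k hk)
  filter_upwards [(ae_restrict_iff' hS').1 hbound, hS'_eq.mem_iff] with x hx hmem hxS
  exact hx (hmem.2 hxS)

theorem ae_le_limsup_of_tendsto_setIntegral (hf : ∀ k, Integrable (f k) μ)
    (hf₀ : Integrable f₀ μ)
    (hlim : ∀ s, MeasurableSet s → μ s < ∞ →
      Tendsto (fun k => ∫ x in s, f k x ∂μ) atTop (𝓝 (∫ x in s, f₀ x ∂μ))) :
    ∀ᵐ x ∂μ, (f₀ x : EReal) ≤ limsup (fun k => (f k x : EReal)) atTop := by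
  have hrat := ae_all_iff.2 fun N => ae_all_iff.2 fun q : ℚ =>
    ae_imp_le_of_tendsto_setIntegral hf hf₀ hlim N q
  filter_upwards [hrat] with x hx
  by_contra! hlt
  obtain ⟨q, hlimsup, hq⟩ := EReal.lt_iff_exists_rat_btwn.1 hlt
  obtain ⟨N, hN⟩ := (eventually_lt_of_limsup_lt hlimsup).exists_forall_of_atTop
  exact (hx N q fun k hk => by exact_mod_cast (hN k hk).le).not_gt (by exact_mod_cast hq)

theorem ae_liminf_le_of_tendsto_setIntegral (hf : ∀ k, Integrable (f k) μ)
    (hf₀ : Integrable f₀ μ)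
    (hlim : ∀ s, MeasurableSet s → μ s < ∞ →
      Tendsto (fun k => ∫ x in s, f k x ∂μ) atTop (𝓝 (∫ x in s, f₀ x ∂μ))) :
    ∀ᵐ x ∂μ, liminf (fun k => (f k x : EReal)) atTop ≤ f₀ x := by
  have hneg := ae_le_limsup_of_tendsto_setIntegral (f := fun k x => -f k x) (f₀ := fun x => -f₀ x)
    (fun k => (hf k).neg) hf₀.neg fun s hs hμs => by
      simpa only [integral_neg] using (hlim s hs hμs).neg
  filter_upwards [hneg] with x hx
  rwa [EReal.coe_neg, show (fun k => ((-f k x : ℝ) : EReal)) = -fun k => (f k x : EReal) from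
    funext fun k => EReal.coe_neg _, EReal.limsup_neg, EReal.neg_le_neg_iff] at hx

end MeasureTheory

theorem levinson_lemma_general (T : ℝ)
    (f : ℕ → ℝ → ℝ) (f₀ : ℝ → ℝ)
    (hf : ∀ k, MemLp (f k) 2 (volume.restrict (Icc 0 T)))
    (hf₀ : MemLp f₀ 2 (volume.restrict (Icc 0 T)))
    (hweak : ∀ g : ℝ → ℝ, MemLp g 2 (volume.restrict (Icc 0 T)) →
      Tendsto (fun k => ∫ t in Icc 0 T, f k t * g t) atTop
        (nhds (∫ t in Icc 0 T, f₀ t * g t))) :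
    (∀ᵐ t ∂(volume.restrict (Icc 0 T)),
        (f₀ t : EReal) ≤ limsup (fun k => ((f k t : ℝ) : EReal)) atTop) ∧
    (∀ᵐ t ∂(volume.restrict (Icc 0 T)),
        liminf (fun k => ((f k t : ℝ) : EReal)) atTop ≤ (f₀ t : EReal)) := by
  have : IsFiniteMeasure (volume.restrict (Icc (0 : ℝ) T)) :=
    isFiniteMeasure_restrict.2 measure_Icc_lt_top.ne
  have hint : ∀ k, Integrable (f k) (volume.restrict (Icc 0 T)) :=
    fun k => (hf k).integrable one_le_two
  have hlim : ∀ s, MeasurableSet s → volume.restrict (Icc 0 T) s < ∞ →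
      Tendsto (fun k => ∫ t in s, f k t ∂(volume.restrict (Icc 0 T))) atTop
        (𝓝 (∫ t in s, f₀ t ∂(volume.restrict (Icc 0 T)))) := fun s hs hμs => by
    simpa only [integral_mul_indicator_one _ hs] using
      hweak (s.indicator 1) (memLp_indicator_const 2 hs 1 (.inr hμs.ne))
  exact ⟨ae_le_limsup_of_tendsto_setIntegral hint (hf₀.integrable one_le_two) hlim,
    ae_liminf_le_of_tendsto_setIntegral hint (hf₀.integrable one_le_two) hlim⟩

/-- Levinson's lemma: a weak L² limit is a.e. between the pointwise liminf and limsup. -/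
theorem levinson_lemma (T : ℝ) (hT : 0 < T)
    (f : ℕ → ℝ → ℝ) (f₀ : ℝ → ℝ)
    (hf : ∀ k, MemLp (f k) 2 (volume.restrict (Icc 0 T)))
    (hf₀ : MemLp f₀ 2 (volume.restrict (Icc 0 T)))
    (hbdd : ∃ C : ℝ, ∀ k,
      eLpNorm (f k) 2 (volume.restrict (Icc 0 T)) ≤ ENNReal.ofReal C)
    (hweak : ∀ g : ℝ → ℝ, MemLp g 2 (volume.restrict (Icc 0 T)) →
      Tendsto (fun k => ∫ t in Icc 0 T, f k t * g t) atTop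
        (nhds (∫ t in Icc 0 T, f₀ t * g t))) :
    (∀ᵐ t ∂(volume.restrict (Icc 0 T)),
        (f₀ t : EReal) ≤ limsup (fun k => ((f k t : ℝ) : EReal)) atTop) ∧
    (∀ᵐ t ∂(volume.restrict (Icc 0 T)),
        liminf (fun k => ((f k t : ℝ) : EReal)) atTop ≤ (f₀ t : EReal)) :=
  levinson_lemma_general T f f₀ hf hf₀ hweak
end

section
/- Assume B(t) ≥ 0 a.e. in [0,T]. Let {ε_k} be a sequence with ε_k → 0⁺, and let z^{(k)} be a feasible solution of (CLP_{ε_k}) such that the sequence {z^{(k)}} is uniformly essentially bounded. Then there exists a subsequence {z^{(k_r)}} converging weakly in L²_q[0,T] to some z⁰ that is a feasible solution of (CLP) (with constraints holding a.e.). -/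
/-!
Bounded sets of the separable Hilbert space `L²[0,T]` are weakly sequentially compact
(Banach–Alaoglu), which yields the subsequence and the limit `z⁰`. The constraints pass to the
limit in integrated form: for a measurable `v`, Fubini rewrites `∫_v (c + ∫₀ᵗ K ζ - B ζ)` as
`∫_v c + ∑ⱼ ⟨ζⱼ, hⱼ⟩` with `hⱼ ∈ L^∞`, a weakly continuous affine functional of `ζ`. Hence
`∫_v slack(z⁰) = lim ∫_v slack(z^{(k_r)}) ≥ lim (-ε_{k_r} |v|) = 0` for every `v`, so the slack
of `z⁰` is a.e. nonnegative; nonnegativity of `z⁰` is the same argument applied to `zⱼ`.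
-/

open MeasureTheory Set Filter Topology
open scoped ENNReal InnerProductSpace

section WeakCompactness

variable {E : Type*} [NormedAddCommGroup E] [InnerProductSpace ℝ E] [CompleteSpace E]
  [TopologicalSpace.SeparableSpace E]

theorem exists_subseq_tendsto_inner_of_isBounded {x : ℕ → E} (hx : Bornology.IsBounded (range x)) :
    ∃ φ : ℕ → ℕ, StrictMono φ ∧ ∃ y : E,
      ∀ g, Tendsto (fun r => ⟪x (φ r), g⟫_ℝ) atTop (𝓝 ⟪y, g⟫_ℝ) := by
  obtain ⟨M, hM⟩ := isBounded_iff_forall_norm_le.1 hx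
  let F : ℕ → WeakDual ℝ E := fun k => StrongDual.toWeakDual (InnerProductSpace.toDual ℝ E (x k))
  have hF : ∀ k, F k ∈ WeakDual.toStrongDual ⁻¹' Metric.closedBall 0 M := fun k => by
    simpa [F] using hM _ (mem_range_self k)
  obtain ⟨ℓ, -, φ, hφ, hlim⟩ := WeakDual.isSeqCompact_closedBall ℝ E 0 M hF
  refine ⟨φ, hφ, (InnerProductSpace.toDual ℝ E).symm (WeakDual.toStrongDual ℓ), fun g => ?_⟩
  rw [InnerProductSpace.toDual_symm_apply]
  exact ((WeakDual.eval_continuous g).tendsto ℓ).comp hlim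

theorem exists_subseq_tendsto_inner_pi {ι : Type*} [Fintype ι] {x : ℕ → ι → E} {M : ℝ}
    (hx : ∀ k j, ‖x k j‖ ≤ M) :
    ∃ φ : ℕ → ℕ, StrictMono φ ∧ ∃ y : ι → E,
      ∀ j g, Tendsto (fun r => ⟪x (φ r) j, g⟫_ℝ) atTop (𝓝 ⟪y j, g⟫_ℝ) := by
  classical
  have hbdd : Bornology.IsBounded (range x) := isBounded_iff_forall_norm_le.2
    ⟨max M 0, by
      rintro _ ⟨k, rfl⟩
      exact (pi_norm_le_iff_of_nonneg (le_max_right _ _)).2 fun j =>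
        (hx k j).trans (le_max_left _ _)⟩
  have hbdd2 : Bornology.IsBounded (range fun k => WithLp.toLp 2 (x k)) := by
    rw [range_comp']
    exact (PiLp.lipschitzWith_toLp 2 (fun _ : ι => E)).isBounded_image hbdd
  obtain ⟨φ, hφ, y, hy⟩ := exists_subseq_tendsto_inner_of_isBounded hbdd2
  refine ⟨φ, hφ, fun j => y j, fun j g => ?_⟩
  simpa [PiLp.inner_apply, apply_ite, Finset.sum_ite_eq'] using hy (PiLp.single 2 j g)

end WeakCompactness

section L2

variable {α : Type*} [MeasurableSpace α] {μ : Measure α}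

theorem MeasureTheory.L2.inner_toLp_eq_integral_mul (f : Lp ℝ 2 μ) {g : α → ℝ} (hg : MemLp g 2 μ) :
    ⟪f, hg.toLp g⟫_ℝ = ∫ t, f t * g t ∂μ := by
  rw [L2.inner_def]
  refine integral_congr_ae ?_
  filter_upwards [hg.coeFn_toLp] with t ht
  simp [ht, mul_comm]

theorem exists_subseq_tendsto_integral_mul [TopologicalSpace.SeparableSpace (Lp ℝ 2 μ)]
    {ι : Type*} [Fintype ι] {f : ℕ → α → ι → ℝ} {M : ℝ≥0∞} (hM : M ≠ ∞)
    (hf : ∀ k j, MemLp (fun t => f k t j) 2 μ) (hbdd : ∀ k j, eLpNorm (fun t => f k t j) 2 μ ≤ M) :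
    ∃ φ : ℕ → ℕ, StrictMono φ ∧ ∃ f₀ : α → ι → ℝ, (∀ j, MemLp (fun t => f₀ t j) 2 μ) ∧
      ∀ g, MemLp g 2 μ → ∀ j,
        Tendsto (fun r => ∫ t, f (φ r) t j * g t ∂μ) atTop (𝓝 (∫ t, f₀ t j * g t ∂μ)) := by
  have hnorm : ∀ k j, ‖(hf k j).toLp‖ ≤ M.toReal := fun k j => by
    rw [Lp.norm_toLp]
    exact ENNReal.toReal_mono hM (hbdd k j)
  obtain ⟨φ, hφ, w, hw⟩ := exists_subseq_tendsto_inner_pi hnorm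
  refine ⟨φ, hφ, fun t j => w j t, fun j => Lp.memLp (w j), fun g hg j => ?_⟩
  have hfg : ∀ k, ∫ t, f k t j * g t ∂μ = ⟪(hf k j).toLp, hg.toLp g⟫_ℝ := fun k => by
    rw [L2.inner_toLp_eq_integral_mul]
    refine integral_congr_ae ?_
    filter_upwards [(hf k j).coeFn_toLp] with t ht
    rw [ht]
  simpa only [hfg, L2.inner_toLp_eq_integral_mul] using hw j (hg.toLp g)

theorem exists_subseq_tendsto_integral_mul_of_ae_abs_le [IsFiniteMeasure μ]
    [TopologicalSpace.SeparableSpace (Lp ℝ 2 μ)] {ι : Type*} [Fintype ι] {f : ℕ → α → ι → ℝ}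
    {C : ℝ} (hf : ∀ k j, AEStronglyMeasurable (fun t => f k t j) μ)
    (hC : ∀ k j, ∀ᵐ t ∂μ, |f k t j| ≤ C) :
    ∃ φ : ℕ → ℕ, StrictMono φ ∧ ∃ f₀ : α → ι → ℝ, (∀ j, MemLp (fun t => f₀ t j) 2 μ) ∧
      ∀ g, MemLp g 2 μ → ∀ j,
        Tendsto (fun r => ∫ t, f (φ r) t j * g t ∂μ) atTop (𝓝 (∫ t, f₀ t j * g t ∂μ)) := by
  have hC' : ∀ k j, ∀ᵐ t ∂μ, ‖f k t j‖ ≤ C := fun k j => (hC k j).mono fun t ht => by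
    rwa [Real.norm_eq_abs]
  exact exists_subseq_tendsto_integral_mul (by finiteness)
    (fun k j => MemLp.of_bound (hf k j) C (hC' k j)) fun k j => eLpNorm_le_of_ae_bound (hC' k j)

end L2

section WeakLimit

variable {α : Type*} [MeasurableSpace α] {μ : Measure α} [IsFiniteMeasure μ]

theorem tendsto_setIntegral_of_tendsto_integral_mul {f : ℕ → α → ℝ} {f₀ : α → ℝ}
    (hf : ∀ g, MemLp g 2 μ → Tendsto (fun r => ∫ t, f r t * g t ∂μ) atTop (𝓝 (∫ t, f₀ t * g t ∂μ)))
    {v : Set α} (hv : MeasurableSet v) :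
    Tendsto (fun r => ∫ t in v, f r t ∂μ) atTop (𝓝 (∫ t in v, f₀ t ∂μ)) := by
  have hind : ∀ u : α → ℝ, ∫ t, u t * v.indicator (fun _ => 1) t ∂μ = ∫ t in v, u t ∂μ :=
    fun u => by simp_rw [← indicator_mul_right, mul_one, integral_indicator hv]
  simpa only [hind] using hf _ ((memLp_const 1).indicator hv)

theorem ae_nonneg_of_tendsto_setIntegral {D : ℕ → α → ℝ} {D₀ : α → ℝ} {δ : ℕ → ℝ}
    (hD : ∀ r, Integrable (D r) μ) (hD₀ : Integrable D₀ μ) (hδ : Tendsto δ atTop (𝓝 0))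
    (hle : ∀ r, ∀ᵐ t ∂μ, -δ r ≤ D r t)
    (hlim : ∀ v, MeasurableSet v →
      Tendsto (fun r => ∫ t in v, D r t ∂μ) atTop (𝓝 (∫ t in v, D₀ t ∂μ))) :
    0 ≤ᵐ[μ] D₀ := by
  refine ae_nonneg_of_forall_setIntegral_nonneg hD₀ fun v hv _ => ?_
  have hlower : Tendsto (fun r => μ.real v * -δ r) atTop (𝓝 0) := by
    simpa using hδ.neg.const_mul (μ.real v)
  refine le_of_tendsto_of_tendsto hlower (hlim v hv) (Eventually.of_forall fun r => ?_)
  show μ.real v * -δ r ≤ _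
  rw [← smul_eq_mul, ← setIntegral_const]
  exact setIntegral_mono_ae (integrable_const _) (hD r).integrableOn (hle r)

end WeakLimit

section BoundedKernel

variable {α β ι : Type*} [MeasurableSpace α] [MeasurableSpace β] {μ : Measure α} {ν : Measure β}
  [IsFiniteMeasure μ] [SFinite ν] [Fintype ι]

theorem memLp_top_integral_prod_left {κ : α × β → ℝ} (hκ : MemLp κ ∞ (μ.prod ν)) :
    MemLp (fun s => ∫ t, κ (t, s) ∂μ) ∞ ν := by
  have hswap : ∀ᵐ x ∂(ν.prod μ), ‖κ x.swap‖ ≤ lpNorm κ ∞ (μ.prod ν) :=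
    Measure.measurePreserving_swap.quasiMeasurePreserving.ae (ae_le_lpNorm_exponent_top hκ)
  refine memLp_top_of_bound hκ.aestronglyMeasurable.prod_swap.integral_prod_right'
    (lpNorm κ ∞ (μ.prod ν) * μ.real univ) ?_
  filter_upwards [Measure.ae_ae_of_ae_prod hswap] with s hs
  exact norm_integral_le_of_norm_le_const hs

theorem integrable_mul_snd {κ : α × β → ℝ} (hκ : MemLp κ ∞ (μ.prod ν)) {ζ : β → ℝ}
    (hζ : Integrable ζ ν) : Integrable (fun x => κ x * ζ x.2) (μ.prod ν) :=
  hκ.integrable_mul (memLp_one_iff_integrable.2 (hζ.comp_snd μ))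

theorem integral_integral_sum_mul_swap {κ : ι → α × β → ℝ} (hκ : ∀ j, MemLp (κ j) ∞ (μ.prod ν))
    {ζ : β → ι → ℝ} (hζ : ∀ j, Integrable (fun s => ζ s j) ν) :
    ∫ t, ∫ s, ∑ j, κ j (t, s) * ζ s j ∂ν ∂μ = ∑ j, ∫ s, ζ s j * ∫ t, κ j (t, s) ∂μ ∂ν := by
  have hκζ : ∀ j, Integrable (fun x => κ j x * ζ x.2 j) (μ.prod ν) := fun j =>
    integrable_mul_snd (hκ j) (hζ j)
  have hslice : ∀ᵐ s ∂ν, ∀ j, Integrable (fun t => κ j (t, s) * ζ s j) μ :=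
    ae_all_iff.2 fun j => (hκζ j).prod_left_ae
  rw [integral_integral_swap (integrable_finsetSum _ fun j _ => hκζ j), ← integral_finsetSum]
  · refine integral_congr_ae ?_
    filter_upwards [hslice] with s hs
    rw [integral_finsetSum _ fun j _ => hs j]
    simp_rw [integral_mul_const, mul_comm]
  · exact fun j _ =>
      (memLp_one_iff_integrable.2 (hζ j)).integrable_mul (memLp_top_integral_prod_left (hκ j))

end BoundedKernel

section Volterra

variable {ι : Type*} {T : ℝ}

local notation "μT" => volume.restrict (Icc (0 : ℝ) T)

def lowerTriangle : Set (ℝ × ℝ) := {x | x.2 ≤ x.1}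

theorem measurableSet_lowerTriangle : MeasurableSet lowerTriangle :=
  measurableSet_le measurable_snd measurable_fst

noncomputable def lowerKernel (k : ℝ → ℝ → ι → ℝ) (j : ι) : ℝ × ℝ → ℝ :=
  lowerTriangle.indicator fun x => k x.1 x.2 j

theorem memLp_lowerKernel_restrict_prod {μ : Measure ℝ} [SFinite μ] {k : ℝ → ℝ → ι → ℝ} {j : ι}
    (hk : MemLp (fun x : ℝ × ℝ => k x.1 x.2 j) ∞ (μ.prod μ)) (v : Set ℝ) :
    MemLp (lowerKernel k j) ∞ ((μ.restrict v).prod μ) := by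
  rw [Measure.restrict_prod_eq_prod_univ]
  exact (hk.indicator measurableSet_lowerTriangle).restrict _

variable [Fintype ι]

noncomputable def volterra (k : ℝ → ℝ → ι → ℝ) (ζ : ℝ → ι → ℝ) (t : ℝ) : ℝ :=
  ∫ s in Icc 0 t, ∑ j, k t s j * ζ s j

theorem volterra_eq_integral_lowerKernel (k : ℝ → ℝ → ι → ℝ) (ζ : ℝ → ι → ℝ) {t : ℝ}
    (ht : t ∈ Icc 0 T) :
    volterra k ζ t = ∫ s, ∑ j, lowerKernel k j (t, s) * ζ s j ∂μT := by
  have hIcc : Iic t ∩ Icc 0 T = Icc 0 t := by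
    ext s
    simp only [mem_inter_iff, mem_Iic, mem_Icc]
    exact ⟨fun h => ⟨h.2.1, h.1⟩, fun h => ⟨h.2, h.1, h.2.trans ht.2⟩⟩
  have hind : ∀ s, ∑ j, lowerKernel k j (t, s) * ζ s j
      = (Iic t).indicator (fun s => ∑ j, k t s j * ζ s j) s := fun s => by
    by_cases hst : s ≤ t <;> simp [lowerKernel, lowerTriangle, hst]
  simp_rw [hind, integral_indicator measurableSet_Iic,
    Measure.restrict_restrict measurableSet_Iic, hIcc, volterra]

variable {k : ℝ → ℝ → ι → ℝ} {ζ : ℝ → ι → ℝ}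

theorem setIntegral_volterra
    (hk : ∀ j, MemLp (fun x : ℝ × ℝ => k x.1 x.2 j) ∞ ((μT).prod μT))
    (hζ : ∀ j, Integrable (fun s => ζ s j) μT) (v : Set ℝ) :
    ∫ t in v, volterra k ζ t ∂μT =
      ∑ j, ∫ s, ζ s j * ∫ t in v, lowerKernel k j (t, s) ∂μT ∂μT := by
  rw [← integral_integral_sum_mul_swap (fun j => memLp_lowerKernel_restrict_prod (hk j) v) hζ]
  refine integral_congr_ae (ae_restrict_of_ae ?_)
  filter_upwards [ae_restrict_mem measurableSet_Icc] with t ht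
  exact volterra_eq_integral_lowerKernel k ζ ht

theorem integrable_volterra
    (hk : ∀ j, MemLp (fun x : ℝ × ℝ => k x.1 x.2 j) ∞ ((μT).prod μT))
    (hζ : ∀ j, Integrable (fun s => ζ s j) μT) :
    Integrable (volterra k ζ) μT := by
  have h : Integrable (fun x : ℝ × ℝ => ∑ j, lowerKernel k j x * ζ x.2 j) ((μT).prod μT) :=
    integrable_finsetSum _ fun j _ =>
      integrable_mul_snd ((hk j).indicator measurableSet_lowerTriangle) (hζ j)
  refine h.integral_prod_left.congr ?_
  filter_upwards [ae_restrict_mem measurableSet_Icc] with t ht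
  exact (volterra_eq_integral_lowerKernel k ζ ht).symm

end Volterra

section MatrixTerm

variable {α ι : Type*} [MeasurableSpace α] {μ : Measure α} [Fintype ι] {b : α → ι → ℝ}
  {ζ : α → ι → ℝ}

theorem integrable_sum_mul (hb : ∀ j, MemLp (fun t => b t j) ∞ μ)
    (hζ : ∀ j, Integrable (fun t => ζ t j) μ) : Integrable (fun t => ∑ j, b t j * ζ t j) μ :=
  integrable_finsetSum _ fun j _ => (hb j).integrable_mul (memLp_one_iff_integrable.2 (hζ j))

theorem setIntegral_sum_mul (hb : ∀ j, MemLp (fun t => b t j) ∞ μ)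
    (hζ : ∀ j, Integrable (fun t => ζ t j) μ) {v : Set α} (hv : MeasurableSet v) :
    ∫ t in v, ∑ j, b t j * ζ t j ∂μ = ∑ j, ∫ t, ζ t j * v.indicator (fun t => b t j) t ∂μ := by
  have hbζ : ∀ j, Integrable (fun t => b t j * ζ t j) μ := fun j =>
    (hb j).integrable_mul (memLp_one_iff_integrable.2 (hζ j))
  rw [integral_finsetSum _ fun j _ => (hbζ j).integrableOn]
  refine Finset.sum_congr rfl fun j _ => ?_
  rw [← integral_indicator hv]
  congr with t
  rw [indicator_mul_left, mul_comm]

end MatrixTerm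

section Slack

variable {ι κ : Type*} [Fintype ι] {T : ℝ} {c : ℝ → κ → ℝ} {B : ℝ → κ → ι → ℝ}
  {K : ℝ → ℝ → κ → ι → ℝ} {i : κ}

local notation "μT" => volume.restrict (Icc (0 : ℝ) T)

noncomputable def clpSlack (c : ℝ → κ → ℝ) (B : ℝ → κ → ι → ℝ) (K : ℝ → ℝ → κ → ι → ℝ)
    (ζ : ℝ → ι → ℝ) (i : κ) (t : ℝ) : ℝ :=
  c t i + volterra (fun t s => K t s i) ζ t - ∑ j, B t i j * ζ t j

theorem integrable_clpSlack (hc : Integrable (fun t => c t i) μT)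
    (hB : ∀ j, MemLp (fun t => B t i j) ∞ μT)
    (hK : ∀ j, MemLp (fun x : ℝ × ℝ => K x.1 x.2 i j) ∞ ((μT).prod μT))
    {ζ : ℝ → ι → ℝ} (hζ : ∀ j, Integrable (fun s => ζ s j) μT) :
    Integrable (clpSlack c B K ζ i) μT :=
  (hc.add (integrable_volterra hK hζ)).sub (integrable_sum_mul hB hζ)

theorem exists_setIntegral_clpSlack_eq (hc : Integrable (fun t => c t i) μT)
    (hB : ∀ j, MemLp (fun t => B t i j) ∞ μT)
    (hK : ∀ j, MemLp (fun x : ℝ × ℝ => K x.1 x.2 i j) ∞ ((μT).prod μT))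
    {v : Set ℝ} (hv : MeasurableSet v) :
    ∃ h : ι → ℝ → ℝ, (∀ j, MemLp (h j) 2 μT) ∧
      ∀ ζ : ℝ → ι → ℝ, (∀ j, Integrable (fun s => ζ s j) μT) →
        ∫ t in v, clpSlack c B K ζ i t ∂μT = ∫ t in v, c t i ∂μT + ∑ j, ∫ s, ζ s j * h j s ∂μT := by
  refine ⟨fun j s => ∫ t in v, lowerKernel (fun t s => K t s i) j (t, s) ∂μT -
    v.indicator (fun t => B t i j) s, fun j => ?_, fun ζ hζ => ?_⟩
  · exact ((memLp_top_integral_prod_left (memLp_lowerKernel_restrict_prod (hK j) v)).sub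
      ((hB j).indicator hv)).mono_exponent le_top
  · have hmul : ∀ j {g : ℝ → ℝ}, MemLp g ∞ μT → Integrable (fun s => ζ s j * g s) μT :=
      fun j _ hg => (memLp_one_iff_integrable.2 (hζ j)).integrable_mul hg
    have hcV : Integrable (fun t => c t i + volterra (fun t s => K t s i) ζ t) μT :=
      hc.add (integrable_volterra hK hζ)
    unfold clpSlack
    rw [integral_sub hcV.integrableOn (integrable_sum_mul hB hζ).integrableOn,
      integral_add hc.integrableOn (integrable_volterra hK hζ).integrableOn,
      setIntegral_volterra hK hζ v, setIntegral_sum_mul hB hζ hv, add_sub_assoc,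
      ← Finset.sum_sub_distrib]
    congr 1
    refine Finset.sum_congr rfl fun j _ => ?_
    rw [← integral_sub (hmul j (memLp_top_integral_prod_left
      (memLp_lowerKernel_restrict_prod (hK j) v))) (hmul j ((hB j).indicator hv))]
    simp_rw [mul_sub]

theorem tendsto_setIntegral_clpSlack (hc : Integrable (fun t => c t i) μT)
    (hB : ∀ j, MemLp (fun t => B t i j) ∞ μT)
    (hK : ∀ j, MemLp (fun x : ℝ × ℝ => K x.1 x.2 i j) ∞ ((μT).prod μT))
    {f : ℕ → ℝ → ι → ℝ} {f₀ : ℝ → ι → ℝ}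
    (hf : ∀ r j, Integrable (fun s => f r s j) μT)
    (hf₀ : ∀ j, Integrable (fun s => f₀ s j) μT)
    (hlim : ∀ g, MemLp g 2 μT → ∀ j,
      Tendsto (fun r => ∫ t, f r t j * g t ∂μT) atTop (𝓝 (∫ t, f₀ t j * g t ∂μT)))
    {v : Set ℝ} (hv : MeasurableSet v) :
    Tendsto (fun r => ∫ t in v, clpSlack c B K (f r) i t ∂μT) atTop
      (𝓝 (∫ t in v, clpSlack c B K f₀ i t ∂μT)) := by
  obtain ⟨h, hh, hrepr⟩ := exists_setIntegral_clpSlack_eq hc hB hK hv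
  simp only [hrepr _ (hf _), hrepr _ hf₀]
  exact tendsto_const_nhds.add (tendsto_finsetSum _ fun j _ => hlim _ (hh j) j)

end Slack

theorem clp_weak_limit_feasible_general (T : ℝ) (p q : ℕ)
    (c : ℝ → Fin p → ℝ) (B : ℝ → Fin p → Fin q → ℝ)
    (K : ℝ → ℝ → Fin p → Fin q → ℝ)
    (hc : ∀ i, MemLp (fun t => c t i) ⊤ (volume.restrict (Icc 0 T)))
    (hB : ∀ i j, MemLp (fun t => B t i j) ⊤ (volume.restrict (Icc 0 T)))
    (hK : ∀ i j, MemLp (fun x : ℝ × ℝ => K x.1 x.2 i j) ⊤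
      ((volume.restrict (Icc 0 T)).prod (volume.restrict (Icc 0 T))))
    (ε : ℕ → ℝ) (hεlim : Tendsto ε atTop (nhds 0))
    (z : ℕ → ℝ → Fin q → ℝ)
    (hz : ∀ k j, MemLp (fun t => z k t j) ⊤ (volume.restrict (Icc 0 T)))
    (hbdd : ∃ C : ℝ, ∀ k j, ∀ᵐ t ∂(volume.restrict (Icc 0 T)), |z k t j| ≤ C)
    (hznn : ∀ k, ∀ᵐ t ∂(volume.restrict (Icc 0 T)), ∀ j, 0 ≤ z k t j)
    (hzfeas : ∀ k, ∀ᵐ t ∂(volume.restrict (Icc 0 T)), ∀ i,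
      ∑ j, B t i j * z k t j
        ≤ c t i + ε k + ∫ s in Icc 0 t, ∑ j, K t s i j * z k s j) :
    ∃ φ : ℕ → ℕ, StrictMono φ ∧ ∃ z0 : ℝ → Fin q → ℝ,
      (∀ j, MemLp (fun t => z0 t j) 2 (volume.restrict (Icc 0 T))) ∧
      (∀ g : ℝ → ℝ, MemLp g 2 (volume.restrict (Icc 0 T)) → ∀ j,
        Tendsto (fun r => ∫ t in Icc 0 T, z (φ r) t j * g t) atTop
          (nhds (∫ t in Icc 0 T, z0 t j * g t))) ∧
      (∀ᵐ t ∂(volume.restrict (Icc 0 T)), ∀ j, 0 ≤ z0 t j) ∧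
      (∀ᵐ t ∂(volume.restrict (Icc 0 T)), ∀ i,
        ∑ j, B t i j * z0 t j
          ≤ c t i + ∫ s in Icc 0 t, ∑ j, K t s i j * z0 s j) := by
  obtain ⟨C, hC⟩ := hbdd
  -- required by the instance `Lp.SecondCountableTopology`, which makes `L²[0,T]` separable
  have : Fact ((2 : ℝ≥0∞) ≠ ∞) := ⟨ENNReal.ofNat_ne_top⟩
  obtain ⟨φ, hφ, z0, hz0, hweak⟩ :=
    exists_subseq_tendsto_integral_mul_of_ae_abs_le (fun k j => (hz k j).aestronglyMeasurable) hC
  have hzint : ∀ k j, Integrable (fun t => z k t j) (volume.restrict (Icc 0 T)) :=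
    fun k j => (hz k j).integrable le_top
  have hz0int : ∀ j, Integrable (fun t => z0 t j) (volume.restrict (Icc 0 T)) :=
    fun j => (hz0 j).integrable one_le_two
  refine ⟨φ, hφ, z0, hz0, hweak, ae_all_iff.2 fun j => ?_, ae_all_iff.2 fun i => ?_⟩
  · exact ae_nonneg_of_tendsto_setIntegral (δ := 0) (fun r => hzint (φ r) j) (hz0int j)
      tendsto_const_nhds (fun r => (hznn (φ r)).mono fun t ht => by simpa using ht j)
      fun v hv => tendsto_setIntegral_of_tendsto_integral_mul (fun g hg => hweak g hg j) hv
  · have hslack := ae_nonneg_of_tendsto_setIntegral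
      (fun r => integrable_clpSlack ((hc i).integrable le_top) (hB i) (hK i) (hzint (φ r)))
      (integrable_clpSlack ((hc i).integrable le_top) (hB i) (hK i) hz0int)
      (hεlim.comp hφ.tendsto_atTop)
      (fun r => (hzfeas (φ r)).mono fun t ht => by
        simp only [clpSlack, volterra, Function.comp_apply]; linarith [ht i])
      fun v hv => tendsto_setIntegral_clpSlack ((hc i).integrable le_top) (hB i) (hK i)
        (fun r => hzint (φ r)) hz0int (fun g hg => hweak g hg) hv
    filter_upwards [hslack] with t ht
    simp only [clpSlack, volterra, Pi.zero_apply] at ht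
    linarith

/-- Proposition 3.2(i): a uniformly essentially bounded sequence of feasible solutions
of (CLP_{ε_k}), with ε_k → 0⁺, has a subsequence converging weakly in L² to a
feasible solution of (CLP). -/
theorem clp_weak_limit_feasible (T : ℝ) (hT : 0 < T) (p q : ℕ)
    (c : ℝ → Fin p → ℝ) (B : ℝ → Fin p → Fin q → ℝ)
    (K : ℝ → ℝ → Fin p → Fin q → ℝ)
    (hc : ∀ i, MemLp (fun t => c t i) ⊤ (volume.restrict (Icc 0 T)))
    (hB : ∀ i j, MemLp (fun t => B t i j) ⊤ (volume.restrict (Icc 0 T)))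
    (hBnn : ∀ᵐ t ∂(volume.restrict (Icc 0 T)), ∀ i j, 0 ≤ B t i j)
    (hK : ∀ i j, MemLp (fun x : ℝ × ℝ => K x.1 x.2 i j) ⊤
      ((volume.restrict (Icc 0 T)).prod (volume.restrict (Icc 0 T))))
    (ε : ℕ → ℝ) (hεpos : ∀ k, 0 < ε k) (hεlim : Tendsto ε atTop (nhds 0))
    (z : ℕ → ℝ → Fin q → ℝ)
    (hz : ∀ k j, MemLp (fun t => z k t j) ⊤ (volume.restrict (Icc 0 T)))
    (hbdd : ∃ C : ℝ, ∀ k j, ∀ᵐ t ∂(volume.restrict (Icc 0 T)), |z k t j| ≤ C)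
    (hznn : ∀ k, ∀ᵐ t ∂(volume.restrict (Icc 0 T)), ∀ j, 0 ≤ z k t j)
    (hzfeas : ∀ k, ∀ᵐ t ∂(volume.restrict (Icc 0 T)), ∀ i,
      ∑ j, B t i j * z k t j
        ≤ c t i + ε k + ∫ s in Icc 0 t, ∑ j, K t s i j * z k s j) :
    ∃ φ : ℕ → ℕ, StrictMono φ ∧ ∃ z0 : ℝ → Fin q → ℝ,
      (∀ j, MemLp (fun t => z0 t j) 2 (volume.restrict (Icc 0 T))) ∧
      (∀ g : ℝ → ℝ, MemLp g 2 (volume.restrict (Icc 0 T)) → ∀ j,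
        Tendsto (fun r => ∫ t in Icc 0 T, z (φ r) t j * g t) atTop
          (nhds (∫ t in Icc 0 T, z0 t j * g t))) ∧
      (∀ᵐ t ∂(volume.restrict (Icc 0 T)), ∀ j, 0 ≤ z0 t j) ∧
      (∀ᵐ t ∂(volume.restrict (Icc 0 T)), ∀ i,
        ∑ j, B t i j * z0 t j
          ≤ c t i + ∫ s in Icc 0 t, ∑ j, K t s i j * z0 s j) :=
  clp_weak_limit_feasible_general T p q c B K hc hB hK ε hεlim z hz hbdd hznn hzfeas
end

section
/- Assume B(t) ≥ 0 a.e. in [0,T], (CLP_ε) is feasible, and the feasible set of (CLP_ε) is uniformly essentially bounded. Then (CLP_ε) has an optimal solution z̄ with z̄(t) ≥ 0 for all t ∈ [0,T]; that is, the supremum of ∫₀ᵀ a(t)ᵀz(t)dt over feasible z is attained. -/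
/-!
Viewed in the Hilbert space `L²([0,T]; ℝ^q)`, the feasible set is nonempty, convex, bounded (by
the uniform essential bound) and closed: an `L²`-convergent sequence of feasible points has an a.e.
convergent subsequence, and dominated convergence, with integrable sections `K t ·`, passes the
constraints to the limit. The objective is the continuous linear functional `⟪a, ·⟫`, and such a
functional attains its supremum `M` on a nonempty closed bounded convex set `S`: the slices
`S ∩ {M - 1/(n+1) ≤ ⟪a, ·⟫}`, cut down to their points of nearly minimal norm, are nested with
diameters tending to zero by the parallelogram law, so they meet. Truncating the maximizer at `0`
makes it nonnegative everywhere without changing its class.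
-/

open MeasureTheory Set

/-- A solution `z` is feasible for (CLP_ε). -/
def ClpFeasible (T : ℝ) (p q : ℕ) (c : ℝ → Fin p → ℝ)
    (B : ℝ → Fin p → Fin q → ℝ) (K : ℝ → ℝ → Fin p → Fin q → ℝ)
    (ε : ℝ) (z : ℝ → Fin q → ℝ) : Prop :=
  (∀ j, MemLp (fun t => z t j) ⊤ (volume.restrict (Icc 0 T))) ∧
  (∀ᵐ t ∂(volume.restrict (Icc 0 T)), ∀ j, 0 ≤ z t j) ∧
  (∀ᵐ t ∂(volume.restrict (Icc 0 T)), ∀ i,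
    ∑ j, B t i j * z t j ≤ c t i + ε + ∫ s in Icc 0 t, ∑ j, K t s i j * z s j)

open Metric Filter Topology Bornology

section Hilbert

variable {H : Type*} [NormedAddCommGroup H] [InnerProductSpace ℝ H]

theorem norm_sub_sq_le_of_le_norm_midpoint {x y : H} {d r : ℝ} (hd : 0 ≤ d)
    (hx : ‖x‖ ≤ r) (hy : ‖y‖ ≤ r) (hmid : d ≤ ‖midpoint ℝ x y‖) :
    ‖x - y‖ ^ 2 ≤ 4 * (r ^ 2 - d ^ 2) := by
  have hsum : 2 * d ≤ ‖x + y‖ := by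
    rw [midpoint_eq_smul_add, norm_smul] at hmid
    norm_num at hmid
    linarith
  have hpar := parallelogram_law_with_norm ℝ x y
  nlinarith [norm_nonneg x, norm_nonneg y]

theorem Convex.diam_inter_closedBall_le {s : Set H} (hs : Convex ℝ s) (r : ℝ) :
    diam (s ∩ closedBall 0 r) ≤ √(4 * (r ^ 2 - infDist 0 s ^ 2)) := by
  refine diam_le_of_forall_dist_le (Real.sqrt_nonneg _) fun x hx y hy => ?_
  rw [dist_eq_norm]
  refine Real.le_sqrt_of_sq_le (norm_sub_sq_le_of_le_norm_midpoint infDist_nonneg ?_ ?_ ?_)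
  · simpa using hx.2
  · simpa using hy.2
  · simpa using infDist_le_dist_of_mem (x := 0) (hs.midpoint_mem hx.1 hy.1)

variable [CompleteSpace H]

theorem nonempty_iInter_of_antitone_of_convex {s : ℕ → Set H} (hanti : Antitone s)
    (hne : ∀ n, (s n).Nonempty) (hconv : ∀ n, Convex ℝ (s n)) (hclosed : ∀ n, IsClosed (s n))
    (hbdd : IsBounded (s 0)) : (⋂ n, s n).Nonempty := by
  set d : ℕ → ℝ := fun n => infDist 0 (s n)
  have hd_mono : Monotone d := fun m n hmn => infDist_le_infDist_of_subset (hanti hmn) (hne n)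
  obtain ⟨R, hR⟩ := isBounded_iff_forall_norm_le.1 hbdd
  have hd_bdd : BddAbove (range d) := by
    refine ⟨R, ?_⟩
    rintro - ⟨n, rfl⟩
    obtain ⟨x, hx⟩ := hne n
    calc d n ≤ dist 0 x := infDist_le_dist_of_mem hx
      _ = ‖x‖ := dist_zero_left x
      _ ≤ R := hR x (hanti (Nat.zero_le n) hx)
  set D := ⨆ n, d n
  have hd_tendsto : Tendsto d atTop (𝓝 D) := tendsto_atTop_ciSup hd_mono hd_bdd
  set r : ℕ → ℝ := fun n => D + 1 / (n + 1)
  have hr_tendsto : Tendsto r atTop (𝓝 D) := by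
    simpa [r] using tendsto_const_nhds.add (tendsto_one_div_add_atTop_nhds_zero_nat (𝕜 := ℝ))
  set t : ℕ → Set H := fun n => s n ∩ closedBall 0 (r n)
  have ht_anti : Antitone t := fun m n hmn =>
    inter_subset_inter (hanti hmn) (closedBall_subset_closedBall
      (show D + 1 / ((n : ℝ) + 1) ≤ D + 1 / ((m : ℝ) + 1) by gcongr))
  have ht_ne : ∀ n, (t n).Nonempty := by
    intro n
    have : d n < r n := (le_ciSup hd_bdd n).trans_lt (lt_add_of_pos_right D (by positivity))
    obtain ⟨y, hy, hdist⟩ := (infDist_lt_iff (hne n)).1 this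
    exact ⟨y, hy, mem_closedBall_comm.1 hdist.le⟩
  have ht_diam : ∀ n, diam (t n) ≤ √(4 * (r n ^ 2 - d n ^ 2)) := fun n =>
    (hconv n).diam_inter_closedBall_le (r n)
  have hlim : Tendsto (fun n => √(4 * (r n ^ 2 - d n ^ 2))) atTop (𝓝 0) := by
    simpa using (((hr_tendsto.pow 2).sub (hd_tendsto.pow 2)).const_mul 4).sqrt
  obtain ⟨x, hx⟩ := nonempty_iInter_of_nonempty_biInter
    (fun n => (hclosed n).inter isClosed_closedBall)
    (fun n => isBounded_closedBall.subset inter_subset_right)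
    (fun N => (ht_ne N).mono fun x hx => mem_iInter₂.2 fun n hn => ht_anti hn hx)
    (squeeze_zero (fun n => diam_nonneg) ht_diam hlim)
  exact ⟨x, mem_iInter.2 fun n => (mem_iInter.1 hx n).1⟩

theorem ContinuousLinearMap.exists_isMaxOn_of_isClosed_of_convex (ℓ : H →L[ℝ] ℝ) {S : Set H}
    (hne : S.Nonempty) (hconv : Convex ℝ S) (hclosed : IsClosed S) (hbdd : IsBounded S) :
    ∃ x ∈ S, IsMaxOn ℓ S x := by
  have hℓ_bdd : BddAbove (ℓ '' S) := (ℓ.lipschitz.isBounded_image hbdd).bddAbove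
  set M := sSup (ℓ '' S)
  set s : ℕ → Set H := fun n => S ∩ ℓ ⁻¹' Ici (M - 1 / (n + 1))
  have hs_ne : ∀ n, (s n).Nonempty := by
    intro n
    obtain ⟨-, ⟨x, hx, rfl⟩, hlt⟩ :=
      exists_lt_of_lt_csSup (hne.image ℓ) (sub_lt_self M (by positivity : (0 : ℝ) < 1 / (n + 1)))
    exact ⟨x, hx, hlt.le⟩
  obtain ⟨x, hx⟩ := nonempty_iInter_of_antitone_of_convex (s := s)
    (fun m n hmn => inter_subset_inter_right S fun y (hy : M - 1 / ((n : ℝ) + 1) ≤ ℓ y) =>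
      show M - 1 / ((m : ℝ) + 1) ≤ ℓ y from le_trans (by gcongr) hy)
    hs_ne (fun n => hconv.inter ((convex_Ici _).linear_preimage ℓ.toLinearMap))
    (fun n => hclosed.inter (isClosed_Ici.preimage ℓ.continuous))
    (hbdd.subset inter_subset_left)
  have hx_mem : ∀ n, x ∈ s n := mem_iInter.1 hx
  have hM : M ≤ ℓ x := by
    simpa using le_of_tendsto' (tendsto_const_nhds.sub
      (tendsto_one_div_add_atTop_nhds_zero_nat (𝕜 := ℝ))) fun n => (hx_mem n).2
  exact ⟨x, (hx_mem 0).1, fun y hy => (le_csSup hℓ_bdd ⟨y, hy, rfl⟩).trans hM⟩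

end Hilbert

section DominatedConvergence

variable {ι : Type*} [Fintype ι] {α : Type*} [MeasurableSpace α] {ν : Measure α}

theorem tendsto_integral_sum_mul_of_dominated {k : α → ι → ℝ} {w : ℕ → α → ι → ℝ}
    {w' : α → ι → ℝ} {C : ℝ} (hk : ∀ j, Integrable (k · j) ν)
    (hw : ∀ n j, AEStronglyMeasurable (w n · j) ν) (hbound : ∀ n, ∀ᵐ s ∂ν, ∀ j, |w n s j| ≤ C)
    (hlim : ∀ᵐ s ∂ν, ∀ j, Tendsto (fun n => w n s j) atTop (𝓝 (w' s j))) :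
    Tendsto (fun n => ∫ s, ∑ j, k s j * w n s j ∂ν) atTop (𝓝 (∫ s, ∑ j, k s j * w' s j ∂ν)) := by
  refine tendsto_integral_of_dominated_convergence (fun s => ∑ j, ‖k s j‖ * C)
    (fun n => Finset.aestronglyMeasurable_fun_sum _ fun j _ => (hk j).1.mul (hw n j))
    (integrable_finsetSum _ fun j _ => (hk j).norm.mul_const C) (fun n => ?_) ?_
  · filter_upwards [hbound n] with s hs
    refine (norm_sum_le _ _).trans (Finset.sum_le_sum fun j _ => ?_)
    rw [norm_mul, Real.norm_eq_abs (w n s j)]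
    exact mul_le_mul_of_nonneg_left (hs j) (norm_nonneg _)
  · filter_upwards [hlim] with s hs
    exact tendsto_finsetSum _ fun j _ => (hs j).const_mul _

end DominatedConvergence

noncomputable section Clp

variable {T : ℝ} {p q : ℕ} {c : ℝ → Fin p → ℝ} {B : ℝ → Fin p → Fin q → ℝ}
  {K : ℝ → ℝ → Fin p → Fin q → ℝ} {ε : ℝ}

theorem restrict_Icc_le_restrict_Icc {t : ℝ} (ht : t ≤ T) :
    (volume : Measure ℝ).restrict (Icc 0 t) ≤ volume.restrict (Icc 0 T) :=
  Measure.restrict_mono_set volume (Icc_subset_Icc_right ht)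

theorem ClpFeasible.congr {z₁ z₂ : ℝ → Fin q → ℝ} (hz : ClpFeasible T p q c B K ε z₁)
    (h : ∀ᵐ t ∂volume.restrict (Icc 0 T), ∀ j, z₁ t j = z₂ t j) :
    ClpFeasible T p q c B K ε z₂ := by
  obtain ⟨hmem, hnn, hcons⟩ := hz
  refine ⟨fun j => (hmem j).ae_eq (by filter_upwards [h] with t ht using ht j), ?_, ?_⟩
  · filter_upwards [hnn, h] with t hnn ht j
    exact ht j ▸ hnn j
  · filter_upwards [hcons, h, ae_restrict_mem measurableSet_Icc] with t hcons ht htT i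
    have hint : ∫ s in Icc 0 t, ∑ j, K t s i j * z₁ s j
        = ∫ s in Icc 0 t, ∑ j, K t s i j * z₂ s j :=
      integral_congr_ae <| by
        filter_upwards [ae_mono (restrict_Icc_le_restrict_Icc htT.2) h] with s hs
        simp only [hs]
    simpa only [ht, hint] using hcons i

theorem ClpFeasible.ae_integrable_kernel {z : ℝ → Fin q → ℝ} (hz : ClpFeasible T p q c B K ε z)
    (hK : ∀ᵐ t ∂volume.restrict (Icc 0 T), ∀ i j,
      Integrable (fun s => K t s i j) (volume.restrict (Icc 0 T))) :
    ∀ᵐ t ∂volume.restrict (Icc 0 T), ∀ i, Integrable (fun s => ∑ j, K t s i j * z s j)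
      ((volume : Measure ℝ).restrict (Icc 0 t)) := by
  filter_upwards [hK, ae_restrict_mem measurableSet_Icc] with t hKt htT i
  refine integrable_finsetSum _ fun j _ => ?_
  exact ((hKt i j).mul_of_top_left (hz.1 j)).mono_measure (restrict_Icc_le_restrict_Icc htT.2)

theorem convex_setOf_clpFeasible
    (hK : ∀ᵐ t ∂volume.restrict (Icc 0 T), ∀ i j,
      Integrable (fun s => K t s i j) (volume.restrict (Icc 0 T))) :
    Convex ℝ {z | ClpFeasible T p q c B K ε z} := by
  intro z₁ hz₁ z₂ hz₂ α β hα hβ hαβ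
  refine ⟨fun j => ((hz₁.1 j).const_mul α).add ((hz₂.1 j).const_mul β), ?_, ?_⟩
  · filter_upwards [hz₁.2.1, hz₂.2.1] with t h₁ h₂ j
    simpa using add_nonneg (mul_nonneg hα (h₁ j)) (mul_nonneg hβ (h₂ j))
  · filter_upwards [hz₁.2.2, hz₂.2.2, hz₁.ae_integrable_kernel hK, hz₂.ae_integrable_kernel hK]
      with t h₁ h₂ hi₁ hi₂ i
    have hlin : ∀ k x y : Fin q → ℝ, ∑ j, k j * (α * x j + β * y j)
        = α * ∑ j, k j * x j + β * ∑ j, k j * y j := fun k x y => by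
      simp only [Finset.mul_sum, ← Finset.sum_add_distrib]
      exact Finset.sum_congr rfl fun j _ => by ring
    simp only [Pi.add_apply, Pi.smul_apply, smul_eq_mul, hlin]
    rw [integral_add ((hi₁ i).const_mul α) ((hi₂ i).const_mul β), integral_const_mul,
      integral_const_mul]
    linear_combination α * h₁ i + β * h₂ i + (c t i + ε) * hαβ

abbrev ClpSpace (T : ℝ) (q : ℕ) :=
  Lp (EuclideanSpace ℝ (Fin q)) 2 ((volume : Measure ℝ).restrict (Icc 0 T))

variable (T p q c B K ε) in
def clpFeasibleSet : Set (ClpSpace T q) :=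
  {f | ClpFeasible T p q c B K ε fun t j => f t j}

theorem memLp_two_toLp_of_memLp_top {z : ℝ → Fin q → ℝ}
    (hz : ∀ j, MemLp (fun t => z t j) ⊤ (volume.restrict (Icc 0 T))) :
    MemLp (fun t => (WithLp.toLp 2 (z t) : EuclideanSpace ℝ (Fin q))) 2
      (volume.restrict (Icc 0 T)) :=
  memLp_piLp_iff.2 fun j => (hz j).mono_exponent le_top

def toClpSpace (z : ℝ → Fin q → ℝ)
    (hz : ∀ j, MemLp (fun t => z t j) ⊤ (volume.restrict (Icc 0 T))) : ClpSpace T q :=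
  (memLp_two_toLp_of_memLp_top hz).toLp

theorem coeFn_toClpSpace (z : ℝ → Fin q → ℝ)
    (hz : ∀ j, MemLp (fun t => z t j) ⊤ (volume.restrict (Icc 0 T))) :
    ∀ᵐ t ∂(volume.restrict (Icc 0 T)), ∀ j, toClpSpace z hz t j = z t j := by
  filter_upwards [(memLp_two_toLp_of_memLp_top hz).coeFn_toLp] with t ht j
  rw [toClpSpace, ht]

theorem ClpFeasible.toClpSpace_mem {z : ℝ → Fin q → ℝ} (hz : ClpFeasible T p q c B K ε z) :
    toClpSpace z hz.1 ∈ clpFeasibleSet T p q c B K ε :=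
  hz.congr <| by
    filter_upwards [coeFn_toClpSpace z hz.1] with t ht j using (ht j).symm

theorem inner_toClpSpace_eq_integral (a : ℝ → Fin q → ℝ)
    (ha : ∀ j, MemLp (fun t => a t j) ⊤ (volume.restrict (Icc 0 T))) {f : ClpSpace T q}
    {z : ℝ → Fin q → ℝ} (hfz : ∀ᵐ t ∂(volume.restrict (Icc 0 T)), ∀ j, f t j = z t j) :
    inner ℝ (toClpSpace a ha) f = ∫ t in Icc 0 T, ∑ j, a t j * z t j := by
  rw [L2.inner_def]
  refine integral_congr_ae ?_
  filter_upwards [coeFn_toClpSpace a ha, hfz] with t ha' hz'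
  simp [PiLp.inner_apply, ha', hz', mul_comm]

theorem convex_clpFeasibleSet
    (hK : ∀ᵐ t ∂volume.restrict (Icc 0 T), ∀ i j,
      Integrable (fun s => K t s i j) (volume.restrict (Icc 0 T))) :
    Convex ℝ (clpFeasibleSet T p q c B K ε) := by
  intro f hf g hg α β hα hβ hαβ
  refine (convex_setOf_clpFeasible hK hf hg hα hβ hαβ).congr ?_
  filter_upwards [Lp.coeFn_add (α • f) (β • g), Lp.coeFn_smul α f, Lp.coeFn_smul β g]
    with t hadd hf' hg' j
  simp only [hadd, Pi.add_apply, hf', hg', Pi.smul_apply]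
  rfl

theorem isBounded_clpFeasibleSet {C : ℝ}
    (hC : ∀ z, ClpFeasible T p q c B K ε z →
      ∀ j, ∀ᵐ t ∂(volume.restrict (Icc 0 T)), |z t j| ≤ C) :
    IsBounded (clpFeasibleSet T p q c B K ε) := by
  refine isBounded_iff_forall_norm_le.2
    ⟨_, fun f hf => Lp.norm_le_of_ae_bound (Real.sqrt_nonneg (∑ _j : Fin q, C ^ 2)) ?_⟩
  filter_upwards [ae_all_iff.2 (hC _ hf)] with t ht
  rw [EuclideanSpace.norm_eq]
  refine Real.sqrt_le_sqrt (Finset.sum_le_sum fun j _ => ?_)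
  rw [Real.norm_eq_abs]
  exact pow_le_pow_left₀ (abs_nonneg _) (ht j) 2

theorem ClpFeasible.of_ae_tendsto {C : ℝ}
    (hC : ∀ z, ClpFeasible T p q c B K ε z →
      ∀ j, ∀ᵐ t ∂(volume.restrict (Icc 0 T)), |z t j| ≤ C)
    (hK : ∀ᵐ t ∂(volume.restrict (Icc 0 T)), ∀ i j,
      Integrable (fun s => K t s i j) (volume.restrict (Icc 0 T)))
    {w : ℕ → ℝ → Fin q → ℝ} {w' : ℝ → Fin q → ℝ} (hw : ∀ n, ClpFeasible T p q c B K ε (w n))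
    (hmeas : ∀ j, AEStronglyMeasurable (w' · j) (volume.restrict (Icc 0 T)))
    (hlim : ∀ᵐ t ∂(volume.restrict (Icc 0 T)), ∀ j,
      Tendsto (fun n => w n t j) atTop (𝓝 (w' t j))) :
    ClpFeasible T p q c B K ε w' := by
  have hbound : ∀ n, ∀ᵐ t ∂(volume.restrict (Icc 0 T)), ∀ j, |w n t j| ≤ C :=
    fun n => ae_all_iff.2 (hC _ (hw n))
  refine ⟨fun j => memLp_top_of_bound (hmeas j) C ?_, ?_, ?_⟩
  · filter_upwards [hlim, ae_all_iff.2 hbound] with t hl hb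
    exact le_of_tendsto' ((continuous_abs.tendsto _).comp (hl j)) fun n => hb n j
  · filter_upwards [hlim, ae_all_iff.2 fun n => (hw n).2.1] with t hl hnn j
    exact ge_of_tendsto' (hl j) fun n => hnn n j
  · filter_upwards [hlim, ae_all_iff.2 fun n => (hw n).2.2, hK, ae_restrict_mem measurableSet_Icc]
      with t hl hcons hKt htT i
    have hle := restrict_Icc_le_restrict_Icc htT.2
    have hint := tendsto_integral_sum_mul_of_dominated (k := fun s j => K t s i j)
      (fun j => (hKt i j).mono_measure hle) (fun n j => ((hw n).1 j).1.mono_measure hle)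
      (fun n => ae_mono hle (hbound n)) (ae_mono hle hlim)
    exact le_of_tendsto_of_tendsto' (tendsto_finsetSum _ fun j _ => (hl j).const_mul _)
      (tendsto_const_nhds.add hint) fun n => hcons n i

theorem isClosed_clpFeasibleSet {C : ℝ}
    (hC : ∀ z, ClpFeasible T p q c B K ε z →
      ∀ j, ∀ᵐ t ∂(volume.restrict (Icc 0 T)), |z t j| ≤ C)
    (hK : ∀ᵐ t ∂(volume.restrict (Icc 0 T)), ∀ i j,
      Integrable (fun s => K t s i j) (volume.restrict (Icc 0 T))) :
    IsClosed (clpFeasibleSet T p q c B K ε) := by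
  refine IsSeqClosed.isClosed fun F f hF hlim => ?_
  obtain ⟨ns, -, hae⟩ := (tendstoInMeasure_of_tendsto_Lp hlim).exists_seq_tendsto_ae
  refine ClpFeasible.of_ae_tendsto hC hK (fun n => hF (ns n))
    (fun j => (PiLp.continuous_apply 2 _ j).comp_aestronglyMeasurable (Lp.aestronglyMeasurable f))
    ?_
  filter_upwards [hae] with t ht j
  exact ((PiLp.continuous_apply 2 _ j).tendsto _).comp ht

end Clp

theorem clp_eps_optimal_exists_general (T : ℝ) (p q : ℕ)
    (a : ℝ → Fin q → ℝ) (c : ℝ → Fin p → ℝ)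
    (B : ℝ → Fin p → Fin q → ℝ) (K : ℝ → ℝ → Fin p → Fin q → ℝ)
    (ε : ℝ)
    (ha : ∀ j, MemLp (fun t => a t j) ⊤ (volume.restrict (Icc 0 T)))
    (hK : ∀ i j, MemLp (fun x : ℝ × ℝ => K x.1 x.2 i j) ⊤
      ((volume.restrict (Icc 0 T)).prod (volume.restrict (Icc 0 T))))
    (hfeas : ∃ z, ClpFeasible T p q c B K ε z)
    (hbdd : ∃ C : ℝ, 0 < C ∧ ∀ z, ClpFeasible T p q c B K ε z →
      ∀ j, ∀ᵐ t ∂(volume.restrict (Icc 0 T)), |z t j| ≤ C) :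
    ∃ zbar : ℝ → Fin q → ℝ, ClpFeasible T p q c B K ε zbar ∧
      (∀ t ∈ Icc (0 : ℝ) T, ∀ j, 0 ≤ zbar t j) ∧
      (∀ z, ClpFeasible T p q c B K ε z →
        ∫ t in Icc 0 T, ∑ j, a t j * z t j
          ≤ ∫ t in Icc 0 T, ∑ j, a t j * zbar t j) := by
  obtain ⟨C, -, hC⟩ := hbdd
  obtain ⟨z₀, hz₀⟩ := hfeas
  have hKsec : ∀ᵐ t ∂(volume.restrict (Icc 0 T)), ∀ i j,
      Integrable (fun s => K t s i j) (volume.restrict (Icc 0 T)) :=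
    ae_all_iff.2 fun i => ae_all_iff.2 fun j => ((hK i j).integrable le_top).prod_right_ae
  obtain ⟨f, hf, hmax⟩ := (innerSL ℝ (toClpSpace a ha)).exists_isMaxOn_of_isClosed_of_convex
    ⟨_, hz₀.toClpSpace_mem⟩ (convex_clpFeasibleSet hKsec) (isClosed_clpFeasibleSet hC hKsec)
    (isBounded_clpFeasibleSet hC)
  have hf_eq_max : ∀ᵐ t ∂(volume.restrict (Icc 0 T)), ∀ j, f t j = max (f t j) 0 := by
    filter_upwards [hf.2.1] with t ht j using (max_eq_left (ht j)).symm
  refine ⟨fun t j => max (f t j) 0, hf.congr hf_eq_max, fun t _ j => le_max_right _ _,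
    fun z hz => ?_⟩
  calc ∫ t in Icc 0 T, ∑ j, a t j * z t j
      = inner ℝ (toClpSpace a ha) (toClpSpace z hz.1) :=
        (inner_toClpSpace_eq_integral a ha (coeFn_toClpSpace z hz.1)).symm
    _ ≤ inner ℝ (toClpSpace a ha) f := hmax hz.toClpSpace_mem
    _ = ∫ t in Icc 0 T, ∑ j, a t j * max (f t j) 0 := inner_toClpSpace_eq_integral a ha hf_eq_max

/-- Theorem 3.1(i): existence of optimal solutions of (CLP_ε). -/
theorem clp_eps_optimal_exists (T : ℝ) (hT : 0 < T) (p q : ℕ)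
    (a : ℝ → Fin q → ℝ) (c : ℝ → Fin p → ℝ)
    (B : ℝ → Fin p → Fin q → ℝ) (K : ℝ → ℝ → Fin p → Fin q → ℝ)
    (ε : ℝ) (hε : 0 ≤ ε)
    (ha : ∀ j, MemLp (fun t => a t j) ⊤ (volume.restrict (Icc 0 T)))
    (hc : ∀ i, MemLp (fun t => c t i) ⊤ (volume.restrict (Icc 0 T)))
    (hB : ∀ i j, MemLp (fun t => B t i j) ⊤ (volume.restrict (Icc 0 T)))
    (hBnn : ∀ᵐ t ∂(volume.restrict (Icc 0 T)), ∀ i j, 0 ≤ B t i j)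
    (hK : ∀ i j, MemLp (fun x : ℝ × ℝ => K x.1 x.2 i j) ⊤
      ((volume.restrict (Icc 0 T)).prod (volume.restrict (Icc 0 T))))
    (hfeas : ∃ z, ClpFeasible T p q c B K ε z)
    (hbdd : ∃ C : ℝ, 0 < C ∧ ∀ z, ClpFeasible T p q c B K ε z →
      ∀ j, ∀ᵐ t ∂(volume.restrict (Icc 0 T)), |z t j| ≤ C) :
    ∃ zbar : ℝ → Fin q → ℝ, ClpFeasible T p q c B K ε zbar ∧
      (∀ t ∈ Icc (0 : ℝ) T, ∀ j, 0 ≤ zbar t j) ∧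
      (∀ z, ClpFeasible T p q c B K ε z →
        ∫ t in Icc 0 T, ∑ j, a t j * z t j
          ≤ ∫ t in Icc 0 T, ∑ j, a t j * zbar t j) :=
  clp_eps_optimal_exists_general T p q a c B K ε ha hK hfeas hbdd
end

section
/- Consider the discretized dual problem (DLP^{(N)}) with data a^{(u)} ∈ ℝ^q, B^{(u)}, K^{(v,u)} ∈ ℝ^{p×q}. Assume: (a) a_j^{(u)} ≤ τ for all j, u; (b) Σ_{i=1}^p K_{ij}^{(v,u)} ≤ ν for all j, u, v; (c) for each j, u there is an index i_j with B_{i_j j}^{(u)} ≥ σ > 0, and all B_{ij}^{(u)} ≥ 0. Define 𝔴_u = (τ/σ)(1 + δν/σ)^{N−u} where δ = max_u (t_u − t_{u−1}), and let w^{(u)} ∈ ℝ^p have all entries equal to 𝔴_u. Then Σ_i B_{ij}^{(u)} w_i^{(u)} ≥ a_j^{(u)} + Σ_{v=u+1}^{N} (t_v − t_{v−1}) Σ_i K_{ij}^{(v,u)} w_i^{(v)} for all j and u = 1,…,N−1, and Σ_i B_{ij}^{(N)} w_i^{(N)} ≥ a_j^{(N)}; i.e., (w^{(1)},…,w^{(N)})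 is feasible for (DLP^{(N)}). -/
/-!
The weights 𝔴_v = (τ/σ) r^{N-v}, r = 1 + δν/σ, solve the backward recursion
σ 𝔴_u = τ + δν Σ_{v>u} 𝔴_v exactly (a geometric sum). Feasibility then follows
termwise: each column of `B` has an entry ≥ σ, so Σ_i B_ij 𝔴_u ≥ σ 𝔴_u, while
a_j ≤ τ, each time step is at most δ, and each column sum of `K` is at most ν.
-/

open Finset

theorem add_sum_Icc_mul_pow_eq (c ε : ℝ) {u N : ℕ} (hu : u ≤ N) :
    c + ∑ v ∈ Icc (u + 1) N, ε * (c * (1 + ε) ^ (N - v)) = c * (1 + ε) ^ (N - u) := by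
  induction hu using Nat.decreasingInduction with
  | self => simp
  | of_succ u hu ih =>
    rw [← insert_Icc_add_one_left_eq_Icc (by omega), sum_insert (by simp), add_left_comm, ih,
      show N - u = N - (u + 1) + 1 by omega]
    ring

section

variable {ι : Type*} [Fintype ι]

theorem mul_le_sum_mul_of_le {b : ι → ℝ} (hb : ∀ i, 0 ≤ b i) {σ c : ℝ} {i₀ : ι}
    (hi₀ : σ ≤ b i₀) (hc : 0 ≤ c) : σ * c ≤ ∑ i, b i * c := by
  rw [← sum_mul]
  exact mul_le_mul_of_nonneg_right
    (hi₀.trans (single_le_sum (fun i _ ↦ hb i) (mem_univ i₀))) hc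

theorem sum_mul_le_of_sum_le {k : ι → ℝ} {ν c : ℝ} (hk : ∑ i, k i ≤ ν) (hc : 0 ≤ c) :
    ∑ i, k i * c ≤ ν * c := by
  rw [← sum_mul]
  exact mul_le_mul_of_nonneg_right hk hc

theorem add_sum_weighted_le_of_geometric_weights {τ ν σ δ : ℝ} {N u : ℕ} (hu : u ≤ N)
    (hτ : 0 ≤ τ) (hν : 0 ≤ ν) (hσ : 0 < σ) (hδ : 0 ≤ δ)
    {a : ℝ} (ha : a ≤ τ) {b : ι → ℝ} (hb : ∀ i, 0 ≤ b i) (hbσ : ∃ i, σ ≤ b i)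
    {k : ℕ → ι → ℝ} (hk : ∀ v, ∑ i, k v i ≤ ν)
    {h : ℕ → ℝ} (hh : ∀ v ∈ Icc (u + 1) N, 0 ≤ h v ∧ h v ≤ δ) :
    a + ∑ v ∈ Icc (u + 1) N, h v * ∑ i, k v i * ((τ / σ) * (1 + δ * ν / σ) ^ (N - v))
      ≤ ∑ i, b i * ((τ / σ) * (1 + δ * ν / σ) ^ (N - u)) := by
  set w : ℕ → ℝ := fun v ↦ (τ / σ) * (1 + δ * ν / σ) ^ (N - v) with hw_def
  have hw : ∀ v, 0 ≤ w v := fun v ↦ by positivity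
  have hterm : ∀ v ∈ Icc (u + 1) N,
      h v * ∑ i, k v i * w v ≤ σ * (δ * ν / σ * w v) := by
    intro v hv
    obtain ⟨hh0, hhδ⟩ := hh v hv
    calc h v * ∑ i, k v i * w v ≤ h v * (ν * w v) :=
          mul_le_mul_of_nonneg_left (sum_mul_le_of_sum_le (hk v) (hw v)) hh0
      _ ≤ δ * (ν * w v) := mul_le_mul_of_nonneg_right hhδ (mul_nonneg hν (hw v))
      _ = σ * (δ * ν / σ * w v) := by field_simp
  obtain ⟨i₀, hi₀⟩ := hbσ
  calc a + ∑ v ∈ Icc (u + 1) N, h v * ∑ i, k v i * w v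
      ≤ σ * (τ / σ) + ∑ v ∈ Icc (u + 1) N, σ * (δ * ν / σ * w v) := by
        rw [mul_div_cancel₀ τ hσ.ne']
        exact add_le_add ha (sum_le_sum hterm)
    _ = σ * w u := by
        rw [← mul_sum, ← mul_add, hw_def, add_sum_Icc_mul_pow_eq _ _ hu]
    _ ≤ ∑ i, b i * w u := mul_le_sum_mul_of_le hb hi₀ (hw u)

end

theorem dlp_discretized_feasible_general (τ ν σ : ℝ) (p q N : ℕ) (hN : 1 ≤ N)
    (hτ : 0 < τ) (hν : 0 < ν) (hσ : 0 < σ)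
    (t : ℕ → ℝ)
    (hmono : ∀ u < N, t u < t (u + 1))
    (a : ℕ → Fin q → ℝ) (B : ℕ → Fin p → Fin q → ℝ)
    (K : ℕ → ℕ → Fin p → Fin q → ℝ)
    (ha : ∀ u j, a u j ≤ τ)
    (hK : ∀ u v j, ∑ i, K v u i j ≤ ν)
    (hBnn : ∀ u i j, 0 ≤ B u i j)
    (hBσ : ∀ u, 1 ≤ u → u ≤ N → ∀ j, ∃ i, σ ≤ B u i j)
    (δ : ℝ) (hδ : ∀ u, 1 ≤ u → u ≤ N → t u - t (u - 1) ≤ δ) :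
    (∀ u, 1 ≤ u → u ≤ N - 1 → ∀ j,
      a u j + ∑ v ∈ Finset.Icc (u + 1) N, (t v - t (v - 1)) *
          ∑ i, K v u i j * ((τ / σ) * (1 + δ * ν / σ) ^ (N - v))
        ≤ ∑ i, B u i j * ((τ / σ) * (1 + δ * ν / σ) ^ (N - u))) ∧
    (∀ j, a N j ≤ ∑ i, B N i j * ((τ / σ) * (1 + δ * ν / σ) ^ (N - N))) := by
  have hstep : ∀ v, 1 ≤ v → v ≤ N → 0 ≤ t v - t (v - 1) := fun v hv1 hvN ↦ by
    have := hmono (v - 1) (by omega)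
    rw [Nat.sub_add_cancel hv1] at this
    linarith
  have hδ0 : 0 ≤ δ := (hstep 1 le_rfl hN).trans (hδ 1 le_rfl hN)
  have key : ∀ u, 1 ≤ u → u ≤ N → ∀ j,
      a u j + ∑ v ∈ Icc (u + 1) N, (t v - t (v - 1)) *
          ∑ i, K v u i j * ((τ / σ) * (1 + δ * ν / σ) ^ (N - v))
        ≤ ∑ i, B u i j * ((τ / σ) * (1 + δ * ν / σ) ^ (N - u)) :=
    fun u hu1 huN j ↦ add_sum_weighted_le_of_geometric_weights huN hτ.le hν.le hσ hδ0
      (ha u j) (fun i ↦ hBnn u i j) (hBσ u hu1 huN j) (fun v ↦ hK u v j)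
      (fun v hv ↦ by
        rw [mem_Icc] at hv
        exact ⟨hstep v (by omega) hv.2, hδ v (by omega) hv.2⟩)
  exact ⟨fun u hu1 hu j ↦ key u hu1 (by omega) j, fun j ↦ by simpa using key N hN le_rfl j⟩

/-- Proposition 4.1(ii): the explicit point w^{(u)} with all entries
𝔴_u = (τ/σ)(1 + δν/σ)^{N−u} is feasible for the discretized dual (DLP^{(N)}). -/
theorem dlp_discretized_feasible (T τ ν σ : ℝ) (p q N : ℕ) (hN : 1 ≤ N)
    (hτ : 0 < τ) (hν : 0 < ν) (hσ : 0 < σ)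
    (t : ℕ → ℝ) (ht0 : t 0 = 0) (htN : t N = T)
    (hmono : ∀ u < N, t u < t (u + 1))
    (a : ℕ → Fin q → ℝ) (B : ℕ → Fin p → Fin q → ℝ)
    (K : ℕ → ℕ → Fin p → Fin q → ℝ)
    (ha : ∀ u j, a u j ≤ τ)
    (hK : ∀ u v j, ∑ i, K v u i j ≤ ν)
    (hBnn : ∀ u i j, 0 ≤ B u i j)
    (hBσ : ∀ u, 1 ≤ u → u ≤ N → ∀ j, ∃ i, σ ≤ B u i j)
    (δ : ℝ) (hδ : ∀ u, 1 ≤ u → u ≤ N → t u - t (u - 1) ≤ δ) :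
    (∀ u, 1 ≤ u → u ≤ N - 1 → ∀ j,
      a u j + ∑ v ∈ Finset.Icc (u + 1) N, (t v - t (v - 1)) *
          ∑ i, K v u i j * ((τ / σ) * (1 + δ * ν / σ) ^ (N - v))
        ≤ ∑ i, B u i j * ((τ / σ) * (1 + δ * ν / σ) ^ (N - u))) ∧
    (∀ j, a N j ≤ ∑ i, B N i j * ((τ / σ) * (1 + δ * ν / σ) ^ (N - N))) :=
  dlp_discretized_feasible_general τ ν σ p q N hN hτ hν hσ t hmono a B K ha hK hBnn hBσ δ hδ
end
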